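/- arXiv:1801.03308 — 10 statements merged into one kernel-verified Lean document; each statement's English description precedes it below -/
import Mathlib

section
/- (Lovász Local Lemma, asymmetric version.) Let X be a finite set and P a probability distribution on X. Let 𝒜 = ⋃_{i=1}^r 𝒜_i be a finite collection of subsets (events) of X such that P(A) = p_i for every A ∈ 𝒜_i. Suppose there are real numbers 0 ≤ a_1, …, a_r < 1 and Δ_{ij} ≥ 0 (1 ≤ i,j ≤ r) such that: (1) for every A ∈ 𝒜_i there exists a set 𝒟_A ⊆ 𝒜 with |𝒟_A ∩ 𝒜_j| ≤ Δ_{ij} for all 1 ≤ j ≤ r, such that P(A ∩ E) = P(A)·P(E) for every event E lying in the Boolean algebra of subsets of X generated by 𝒜 \ (𝒟_A ∪ {A}); and (2) p_i ≤ a_i · ∏_{j=1}^r (1 − a_j)^{Δ_{ij}} for all 1 ≤ i ≤ r. Then P(⋂_{A ∈ 𝒜} Aᶜ) > 0. -/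
/-- **Lovász Local Lemma, asymmetric version.**
`X` is a finite set, the probability distribution `P` is given by weights `w`,
`F i` is the collection `𝒜_i` of events, and `𝒜 = ⋃ i, F i`.  Independence of an event `A`
from a family of events is expressed via the Boolean algebra (= σ-algebra, as `X` is finite)
generated by that family. -/
theorem lovasz_local_lemma {X : Type*} [Fintype X]
    (w : X → ℝ) (hw : ∀ x, 0 ≤ w x) (hw1 : ∑ x, w x = 1)
    (P : Set X → ℝ) (hP : ∀ A : Set X, P A = ∑ x, A.indicator w x)
    (r : ℕ) (F : Fin r → Set (Set X))
    (p a : Fin r → ℝ) (Δ : Fin r → Fin r → ℝ)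
    (hp : ∀ i, ∀ A ∈ F i, P A = p i)
    (ha : ∀ i, 0 ≤ a i ∧ a i < 1)
    (hΔ : ∀ i j, 0 ≤ Δ i j)
    (hdep : ∀ i, ∀ A ∈ F i, ∃ D : Set (Set X), D ⊆ (⋃ j, F j) ∧
      (∀ j, ((D ∩ F j).ncard : ℝ) ≤ Δ i j) ∧
      (∀ E : Set X,
        @MeasurableSet X (MeasurableSpace.generateFrom ((⋃ j, F j) \ (D ∪ {A}))) E →
        P (A ∩ E) = P A * P E))
    (hin : ∀ i, p i ≤ a i * ∏ j, (1 - a j) ^ (Δ i j)) :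
    0 < P (⋂ A ∈ (⋃ j, F j), Aᶜ) := by
  classical
  -- basic facts about P
  have hPnn : ∀ A : Set X, 0 ≤ P A := by
    intro A; rw [hP]
    exact Finset.sum_nonneg fun x _ => Set.indicator_nonneg (fun y _ => hw y) x
  have hPmono : ∀ A B : Set X, A ⊆ B → P A ≤ P B := by
    intro A B hAB; rw [hP, hP]
    refine Finset.sum_le_sum fun x _ => ?_
    by_cases hx : x ∈ A
    · simp [Set.indicator_of_mem hx, Set.indicator_of_mem (hAB hx)]
    · rw [Set.indicator_of_notMem hx]
      exact Set.indicator_nonneg (fun y _ => hw y) x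
  have hPuniv : P Set.univ = 1 := by
    rw [hP]; simpa using hw1
  have hPempty : P ∅ = 0 := by rw [hP]; simp
  have hPsplit : ∀ A B : Set X, P A = P (A ∩ B) + P (A ∩ Bᶜ) := by
    intro A B; rw [hP, hP, hP, ← Finset.sum_add_distrib]
    refine Finset.sum_congr rfl fun x _ => ?_
    by_cases hA : x ∈ A <;> by_cases hB : x ∈ B <;>
      simp [Set.indicator, hA, hB]
  -- the "none of S occurs" event
  set 𝒜 : Set (Set X) := ⋃ j, F j with h𝒜
  set N : Finset (Set X) → Set X := fun S => ⋂ B ∈ S, Bᶜ with hN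
  have hNempty : N ∅ = Set.univ := by simp [hN]
  have hNmono : ∀ S T : Finset (Set X), S ⊆ T → N T ⊆ N S := by
    intro S T hST x hx
    simp only [hN, Set.mem_iInter] at hx ⊢
    exact fun B hB => hx B (hST hB)
  have hNinsert : ∀ (B : Set X) (S : Finset (Set X)),
      P (N (insert B S)) = P (N S) - P (B ∩ N S) := by
    intro B S
    have h1 : N (insert B S) = N S ∩ Bᶜ := by
      ext x
      simp only [hN, Set.mem_iInter, Set.mem_inter_iff, Set.mem_compl_iff,
        Finset.mem_insert]
      constructor
      · intro h; exact ⟨fun C hC => h C (Or.inr hC), h B (Or.inl rfl)⟩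
      · rintro ⟨h1, h2⟩ C (rfl | hC)
        · exact h2
        · exact h1 C hC
    have h2 := hPsplit (N S) B
    rw [Set.inter_comm (N S) B] at h2
    rw [h1]; linarith
  -- dispose of the case r = 0
  rcases Nat.eq_zero_or_pos r with hr | hr
  · subst hr
    have h0 : 𝒜 = ∅ := by simp [h𝒜]
    rw [h0, show (⋂ A ∈ (∅ : Set (Set X)), Aᶜ) = Set.univ by simp, hPuniv]
    exact one_pos
  haveI : Nonempty (Fin r) := Fin.pos_iff_nonempty.mp hr
  -- index choice
  set idx : Set X → Fin r := fun B =>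
    if h : ∃ j, B ∈ F j then h.choose else Classical.arbitrary _ with hidxdef
  have hidx : ∀ B ∈ 𝒜, B ∈ F (idx B) := by
    intro B hB
    rw [h𝒜, Set.mem_iUnion] at hB
    simp only [hidxdef, dif_pos hB]
    exact hB.choose_spec
  have ha1 : ∀ j, 0 < 1 - a j := fun j => by linarith [(ha j).2]
  -- main claim
  have claim : ∀ n : ℕ, ∀ S : Finset (Set X), ↑S ⊆ 𝒜 → S.card ≤ n →
      ∀ i, ∀ A ∈ F i, P (A ∩ N S) ≤ a i * P (N S) := by
    intro n
    induction n with
    | zero =>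
      intro S hS hcard i A hA
      have hSe : S = ∅ := Finset.card_eq_zero.mp (Nat.le_zero.mp hcard)
      subst hSe
      rw [hNempty, Set.inter_univ, hPuniv, mul_one, hp i A hA]
      calc p i ≤ a i * ∏ j, (1 - a j) ^ (Δ i j) := hin i
        _ ≤ a i * 1 := by
            refine mul_le_mul_of_nonneg_left ?_ (ha i).1
            exact Finset.prod_le_one
              (fun j _ => Real.rpow_nonneg (le_of_lt (ha1 j)) _)
              (fun j _ => Real.rpow_le_one (le_of_lt (ha1 j)) (by linarith [(ha j).1]) (hΔ i j))
        _ = a i := mul_one _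
    | succ n ihn =>
      intro S hS hcard i A hA
      by_cases hAS : A ∈ S
      · have hempty : A ∩ N S = ∅ := by
          apply Set.eq_empty_of_forall_notMem
          intro x hx
          have hx2 := hx.2
          simp only [hN, Set.mem_iInter] at hx2
          exact hx2 A hAS hx.1
        rw [hempty, hPempty]
        exact mul_nonneg (ha i).1 (hPnn _)
      obtain ⟨D, hD𝒜, hDcard, hInd⟩ := hdep i A hA
      set S₁ : Finset (Set X) := S.filter (· ∈ D) with hS₁
      set S₂ : Finset (Set X) := S.filter (· ∉ D) with hS₂
      have hmemS₁ : ∀ B, B ∈ S₁ ↔ B ∈ S ∧ B ∈ D := by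
        intro B; rw [hS₁, Finset.mem_filter]
      have hmemS₂ : ∀ B, B ∈ S₂ ↔ B ∈ S ∧ B ∉ D := by
        intro B; rw [hS₂, Finset.mem_filter]
      have hS₂sub : S₂ ⊆ S := fun x hx => ((hmemS₂ x).mp hx).1
      have hunion : S₂ ∪ S₁ = S := by
        rw [Finset.union_comm]
        exact Finset.filter_union_filter_not_eq _ S
      -- membership facts
      have hS₂mem : ∀ B ∈ S₂, B ∈ 𝒜 \ (D ∪ {A}) := by
        intro B hB
        rw [hmemS₂] at hB
        refine ⟨hS hB.1, ?_⟩
        rintro (h | h)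
        · exact hB.2 h
        · exact hAS (h ▸ hB.1)
      -- independence of A from N S₂
      have hmeas : @MeasurableSet X (MeasurableSpace.generateFrom (𝒜 \ (D ∪ {A}))) (N S₂) := by
        refine Finset.measurableSet_biInter S₂ fun B hB => ?_
        exact (MeasurableSpace.measurableSet_generateFrom (hS₂mem B hB)).compl
      have hind : P (A ∩ N S₂) = P A * P (N S₂) := hInd _ hmeas
      -- sub-claim: product lower bound
      have sub : ∀ T : Finset (Set X), T ⊆ S₁ →
          (∏ B ∈ T, (1 - a (idx B))) * P (N S₂) ≤ P (N (S₂ ∪ T)) := by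
        intro T
        induction T using Finset.induction_on with
        | empty => intro _; simp
        | @insert B T hBT ih =>
          intro hins
          have hBS₁ : B ∈ S₁ := hins (Finset.mem_insert_self B T)
          have hTS₁ : T ⊆ S₁ := fun x hx => hins (Finset.mem_insert_of_mem hx)
          have hBS : B ∈ S := ((hmemS₁ B).mp hBS₁).1
          have hB𝒜 : B ∈ 𝒜 := hS hBS
          have hsubS : S₂ ∪ T ⊆ S.erase B := by
            intro x hx
            rw [Finset.mem_erase]
            rcases Finset.mem_union.mp hx with h | h
            · have h' := (hmemS₂ x).mp h
              exact ⟨fun he => h'.2 (he ▸ ((hmemS₁ B).mp hBS₁).2), h'.1⟩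
            · exact ⟨fun he => hBT (he ▸ h), ((hmemS₁ x).mp (hTS₁ h)).1⟩
          have hcard' : (S₂ ∪ T).card ≤ n := by
            calc (S₂ ∪ T).card ≤ (S.erase B).card := Finset.card_le_card hsubS
              _ = S.card - 1 := Finset.card_erase_of_mem hBS
              _ ≤ n := by omega
          have hsub𝒜 : ↑(S₂ ∪ T) ⊆ 𝒜 := by
            intro x hx
            exact hS ((Finset.erase_subset _ _) (hsubS hx))
          have hstep := ihn (S₂ ∪ T) hsub𝒜 hcard' (idx B) B (hidx B hB𝒜)
          rw [Finset.union_insert, hNinsert]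
          rw [Finset.prod_insert hBT]
          have hprodnn : 0 ≤ ∏ B ∈ T, (1 - a (idx B)) :=
            Finset.prod_nonneg fun j _ => le_of_lt (ha1 _)
          have hih := ih hTS₁
          have hBnn : (0:ℝ) ≤ 1 - a (idx B) := le_of_lt (ha1 _)
          nlinarith [hPnn (N (S₂ ∪ T)), hPnn (N S₂)]
      -- counting: product over S₁ vs product of (1-a j)^Δ
      have hcount : ∀ j, ((S₁.filter (fun B => idx B = j)).card : ℝ) ≤ Δ i j := by
        intro j
        have hsub : ↑(S₁.filter (fun B => idx B = j)) ⊆ D ∩ F j := by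
          intro B hB
          obtain ⟨hBS₁, hBj⟩ := Finset.mem_filter.mp (Finset.mem_coe.mp hB)
          obtain ⟨hBS, hBD⟩ := (hmemS₁ B).mp hBS₁
          exact ⟨hBD, hBj ▸ hidx B (hS hBS)⟩
        calc ((S₁.filter (fun B => idx B = j)).card : ℝ)
            = ((↑(S₁.filter (fun B => idx B = j)) : Set (Set X)).ncard : ℝ) := by
              rw [Set.ncard_coe_finset]
          _ ≤ ((D ∩ F j).ncard : ℝ) := by
              exact_mod_cast Nat.cast_le.mpr (Set.ncard_le_ncard hsub (Set.toFinite _))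
          _ ≤ Δ i j := hDcard j
      have hprodge : ∏ j, (1 - a j) ^ (Δ i j) ≤ ∏ B ∈ S₁, (1 - a (idx B)) := by
        rw [← Finset.prod_fiberwise S₁ (fun B => idx B) (fun B => 1 - a (idx B))]
        refine Finset.prod_le_prod (fun j _ => Real.rpow_nonneg (le_of_lt (ha1 j)) _)
          (fun j _ => ?_)
        have h1 : ∏ B ∈ S₁.filter (fun B => idx B = j), (1 - a (idx B))
            = (1 - a j) ^ ((S₁.filter (fun B => idx B = j)).card : ℕ) := by
          rw [Finset.prod_congr rfl (fun B hB => by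
            rw [(Finset.mem_filter.mp hB).2]), Finset.prod_const]
        rw [h1, ← Real.rpow_natCast (1 - a j)]
        exact Real.rpow_le_rpow_of_exponent_ge (ha1 j) (by linarith [(ha j).1]) (hcount j)
      -- put it together
      have hchain := sub S₁ (le_refl _)
      rw [hunion] at hchain
      have hQ₂ : 0 ≤ P (N S₂) := hPnn _
      calc P (A ∩ N S) ≤ P (A ∩ N S₂) :=
            hPmono _ _ (Set.inter_subset_inter_right _ (hNmono _ _ hS₂sub))
        _ = P A * P (N S₂) := hind
        _ = p i * P (N S₂) := by rw [hp i A hA]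
        _ ≤ (a i * ∏ j, (1 - a j) ^ (Δ i j)) * P (N S₂) :=
            mul_le_mul_of_nonneg_right (hin i) hQ₂
        _ ≤ (a i * ∏ B ∈ S₁, (1 - a (idx B))) * P (N S₂) := by
            exact mul_le_mul_of_nonneg_right
              (mul_le_mul_of_nonneg_left hprodge (ha i).1) hQ₂
        _ = a i * ((∏ B ∈ S₁, (1 - a (idx B))) * P (N S₂)) := by ring
        _ ≤ a i * P (N S) := mul_le_mul_of_nonneg_left hchain (ha i).1
  -- lower bound by a positive product
  have prodbound : ∀ S : Finset (Set X), ↑S ⊆ 𝒜 →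
      ∏ B ∈ S, (1 - a (idx B)) ≤ P (N S) := by
    intro S
    induction S using Finset.induction_on with
    | empty => intro _; simp [hNempty, hPuniv]
    | @insert B S hBS ih =>
      intro hins
      have hB𝒜 : B ∈ 𝒜 := hins (by simp)
      have hS𝒜 : ↑S ⊆ 𝒜 := fun x hx => hins (by simp [hx])
      have hstep := claim S.card S hS𝒜 (le_refl _) (idx B) B (hidx B hB𝒜)
      rw [hNinsert, Finset.prod_insert hBS]
      have hih := ih hS𝒜
      have hprodnn : 0 ≤ ∏ B ∈ S, (1 - a (idx B)) :=
        Finset.prod_nonneg fun j _ => le_of_lt (ha1 _)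
      have hBnn : (0:ℝ) ≤ 1 - a (idx B) := le_of_lt (ha1 _)
      nlinarith [hPnn (N S)]
  -- conclude
  have hfin : 𝒜.Finite := Set.toFinite _
  have heq : (⋂ A ∈ 𝒜, Aᶜ) = N hfin.toFinset := by
    ext x
    simp only [hN, Set.mem_iInter, Set.Finite.mem_toFinset]
  rw [heq]
  have hsub : ↑hfin.toFinset ⊆ 𝒜 := by
    rw [Set.Finite.coe_toFinset]
  calc (0:ℝ) < ∏ B ∈ hfin.toFinset, (1 - a (idx B)) :=
        Finset.prod_pos fun j _ => ha1 _
    _ ≤ P (N hfin.toFinset) := prodbound _ hsub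
end

section
/- Let Γ be a simple graph and k ≥ 1. If every finite induced subgraph of Γ admits a nonrepetitive coloring with k colors, then Γ itself admits a nonrepetitive coloring with k colors. -/
/-- A coloring `c` of the vertices of `Γ` is nonrepetitive if for every `n ≥ 1` and every
simple path `x 0, x 1, …, x (2n-1)` in `Γ` (pairwise distinct vertices, consecutive vertices
adjacent) there is some `i < n` with `c (x i) ≠ c (x (n + i))`. -/
def Nonrepetitive {V K : Type*} (Γ : SimpleGraph V) (c : V → K) : Prop :=
  ∀ (n : ℕ) (x : ℕ → V), 1 ≤ n →
    (∀ i j, i < 2 * n → j < 2 * n → i ≠ j → x i ≠ x j) →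
    (∀ i, i + 1 < 2 * n → Γ.Adj (x i) (x (i + 1))) →
    ∃ i < n, c (x i) ≠ c (x (n + i))

/-- If every finite induced subgraph of a simple graph `Γ` admits a nonrepetitive coloring
with `k ≥ 1` colors, then `Γ` itself admits a nonrepetitive coloring with `k` colors. -/
theorem nonrepetitive_of_forall_finite_induced {V : Type*} (Γ : SimpleGraph V) (k : ℕ)
    (hk : 1 ≤ k)
    (h : ∀ W : Finset V, ∃ c : ↥(W : Set V) → Fin k, Nonrepetitive (Γ.induce (W : Set V)) c) :
    ∃ c : V → Fin k, Nonrepetitive Γ c := by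
  classical
  letI : TopologicalSpace (Fin k) := ⊥
  haveI : DiscreteTopology (Fin k) := ⟨rfl⟩
  -- the set of colorings nonrepetitive on paths inside W
  set S : Finset V → Set (V → Fin k) := fun W =>
    { c | ∀ (n : ℕ) (x : ℕ → V), 1 ≤ n →
        (∀ i, i < 2 * n → x i ∈ W) →
        (∀ i j, i < 2 * n → j < 2 * n → i ≠ j → x i ≠ x j) →
        (∀ i, i + 1 < 2 * n → Γ.Adj (x i) (x (i + 1))) →
        ∃ i < n, c (x i) ≠ c (x (n + i)) } with hS
  have hclosed : ∀ W, IsClosed (S W) := by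
    intro W
    have : S W = ⋂ (n : ℕ), ⋂ (x : ℕ → V), ⋂ (_ : 1 ≤ n ∧ (∀ i, i < 2 * n → x i ∈ W) ∧
        (∀ i j, i < 2 * n → j < 2 * n → i ≠ j → x i ≠ x j) ∧
        (∀ i, i + 1 < 2 * n → Γ.Adj (x i) (x (i + 1)))),
        { c : V → Fin k | ∃ i < n, c (x i) ≠ c (x (n + i)) } := by
      ext c
      simp only [hS, Set.mem_setOf_eq, Set.mem_iInter]
      constructor
      · rintro hc n x ⟨h1, h2, h3, h4⟩; exact hc n x h1 h2 h3 h4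
      · intro hc n x h1 h2 h3 h4; exact hc n x ⟨h1, h2, h3, h4⟩
    rw [this]
    refine isClosed_iInter fun n => isClosed_iInter fun x => isClosed_iInter fun _ => ?_
    have : { c : V → Fin k | ∃ i < n, c (x i) ≠ c (x (n + i)) } =
        ⋃ i ∈ Finset.range n, { c : V → Fin k | c (x i) ≠ c (x (n + i)) } := by
      ext c; simp [Set.mem_setOf_eq]
    rw [this]
    refine Set.Finite.isClosed_biUnion (Finset.finite_toSet _) fun i _ => ?_
    have hcont : Continuous fun c : V → Fin k => (c (x i), c (x (n + i))) :=
      (continuous_apply _).prodMk (continuous_apply _)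
    exact (isClosed_discrete {p : Fin k × Fin k | p.1 ≠ p.2}).preimage hcont
  have hnonempty : ∀ W, (S W).Nonempty := by
    intro W
    obtain ⟨c', hc'⟩ := h W
    refine ⟨fun v => if hv : v ∈ W then c' ⟨v, hv⟩ else ⟨0, hk⟩, ?_⟩
    intro n x hn hmem hdist hadj
    have h0 : x 0 ∈ W := hmem 0 (by omega)
    set x' : ℕ → ↥(W : Set V) := fun i =>
      if hi : x i ∈ W then ⟨x i, hi⟩ else ⟨x 0, h0⟩ with hx'
    have hx'eq : ∀ i (hi : i < 2 * n), x' i = ⟨x i, hmem i hi⟩ := by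
      intro i hi; simp [hx', hmem i hi]
    obtain ⟨i, hi, hne⟩ := hc' n x' hn
      (fun i j hi hj hij => by
        rw [hx'eq i hi, hx'eq j hj]
        exact fun he => hdist i j hi hj hij (congrArg Subtype.val he))
      (fun i hi => by
        rw [hx'eq i (by omega), hx'eq (i + 1) hi]
        exact hadj i hi)
    refine ⟨i, hi, ?_⟩
    have hiW : x i ∈ W := hmem i (by omega)
    have hniW : x (n + i) ∈ W := hmem (n + i) (by omega)
    simpa [hiW, hniW, hx'eq i (by omega), hx'eq (n + i) (by omega)] using hne
  have hdir : Directed (· ⊇ ·) S := by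
    intro W₁ W₂
    refine ⟨W₁ ∪ W₂, ?_, ?_⟩
    · intro c hc n x hn hmem hdist hadj
      exact hc n x hn (fun i hi => Finset.mem_union.2 (Or.inl (hmem i hi))) hdist hadj
    · intro c hc n x hn hmem hdist hadj
      exact hc n x hn (fun i hi => Finset.mem_union.2 (Or.inr (hmem i hi))) hdist hadj
  have hcompact : ∀ W, IsCompact (S W) := fun W => (hclosed W).isCompact
  obtain ⟨c, hc⟩ := IsCompact.nonempty_iInter_of_directed_nonempty_isCompact_isClosed
    S hdir hnonempty hcompact hclosed
  refine ⟨c, ?_⟩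
  intro n x hn hdist hadj
  have := Set.mem_iInter.1 hc ((Finset.range (2 * n)).image x)
  exact this n x hn (fun i hi => Finset.mem_image_of_mem x (Finset.mem_range.2 hi)) hdist hadj
end

section
/- Let Γ be a simple graph all of whose vertex degrees are at most d ≥ 1, and let i, j ≥ 1. For any fixed simple path in Γ with 2i vertices, the number of simple paths with 2j vertices (counted as sequences of vertices, all distinct, with consecutive vertices adjacent) that share at least one vertex with the fixed path is at most 4ij·d^{2j}. -/
private lemma exists_labeling {V : Type*} (Γ : SimpleGraph V) (d : ℕ) (hd : 1 ≤ d)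
    (hdeg : ∀ v : V, (Γ.neighborSet v).Finite ∧ (Γ.neighborSet v).ncard ≤ d) (w : V) :
    ∃ f : V → Fin d, Set.InjOn f (Γ.neighborSet w) := by
  haveI : Nonempty (Fin d) := ⟨⟨0, hd⟩⟩
  have hfin := (hdeg w).1
  have hle := (hdeg w).2
  have hcard : (Γ.neighborSet w).encard ≤ (Set.univ : Set (Fin d)).encard := by
    rw [Set.encard_univ]
    rw [hfin.encard_eq_coe_toFinset_card, ← Set.ncard_eq_toFinset_card _ hfin]
    simp only [ENat.card_eq_coe_fintype_card, Fintype.card_fin]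
    exact_mod_cast hle
  obtain ⟨f, _, hf⟩ := Set.Finite.exists_injOn_of_encard_le hfin hcard
  exact ⟨f, hf⟩

private def code {V : Type*} {d n : ℕ} (hd : 1 ≤ d) (F : V → V → Fin d) (s : Fin n)
    (q : Fin n → V) (t : Fin n) : Fin d :=
  if h1 : (t : ℕ) < (s : ℕ) then F (q ⟨(t : ℕ) + 1, by have := s.isLt; omega⟩) (q t)
  else if h2 : (s : ℕ) < (t : ℕ) then F (q ⟨(t : ℕ) - 1, by have := t.isLt; omega⟩) (q t)
  else ⟨0, hd⟩

private lemma anchored_bound {V : Type*} (Γ : SimpleGraph V) (d n : ℕ) (hd : 1 ≤ d)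
    (hdeg : ∀ v : V, (Γ.neighborSet v).Finite ∧ (Γ.neighborSet v).ncard ≤ d)
    (s : Fin n) (v : V) :
    ({q : Fin n → V | (∀ (t : ℕ) (ht : t + 1 < n),
        Γ.Adj (q ⟨t, Nat.lt_of_succ_lt ht⟩) (q ⟨t + 1, ht⟩)) ∧ q s = v}).Finite ∧
    ({q : Fin n → V | (∀ (t : ℕ) (ht : t + 1 < n),
        Γ.Adj (q ⟨t, Nat.lt_of_succ_lt ht⟩) (q ⟨t + 1, ht⟩)) ∧ q s = v}).encard
      ≤ ((d ^ n : ℕ) : ℕ∞) := by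
  classical
  set A : Set (Fin n → V) := {q : Fin n → V | (∀ (t : ℕ) (ht : t + 1 < n),
        Γ.Adj (q ⟨t, Nat.lt_of_succ_lt ht⟩) (q ⟨t + 1, ht⟩)) ∧ q s = v} with hA
  choose F hF using fun w => exists_labeling Γ d hd hdeg w
  have hinjOn : Set.InjOn (code hd F s) A := by
    intro q hq q' hq' hG
    have key : ∀ k : ℕ, ∀ t : Fin n,
        (((s : ℕ) ≤ t ∧ (t : ℕ) - s = k) ∨ ((t : ℕ) ≤ s ∧ (s : ℕ) - t = k)) → q t = q' t := by
      intro k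
      induction k with
      | zero =>
        intro t ht
        have : t = s := by apply Fin.ext; omega
        rw [this, hq.2, hq'.2]
      | succ k ih =>
        intro t ht
        have hgt := congrFun hG t
        rcases ht with ⟨hle, hsub⟩ | ⟨hle, hsub⟩
        · -- s < t, predecessor t-1
          have hst : (s : ℕ) < (t : ℕ) := by omega
          have htlt := t.isLt
          set t' : Fin n := ⟨(t : ℕ) - 1, by omega⟩ with ht'
          have hprev : q t' = q' t' := ih t' (Or.inl ⟨by simp [ht']; omega, by simp [ht']; omega⟩)
          have hadj : Γ.Adj (q t') (q t) := by
            have h := hq.1 ((t : ℕ) - 1) (by omega)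
            convert h using 2 <;> exact Fin.ext (by simp [ht']; omega)
          have hadj' : Γ.Adj (q' t') (q' t) := by
            have h := hq'.1 ((t : ℕ) - 1) (by omega)
            convert h using 2 <;> exact Fin.ext (by simp [ht']; omega)
          have hg : F (q t') (q t) = F (q' t') (q' t) := by
            simpa only [code, dif_neg (by omega : ¬ (t : ℕ) < (s : ℕ)), dif_pos hst] using hgt
          rw [hprev] at hg hadj
          exact hF (q' t') hadj hadj' hg
        · -- t < s, successor t+1
          have hst : (t : ℕ) < (s : ℕ) := by omega
          have hslt := s.isLt
          set t' : Fin n := ⟨(t : ℕ) + 1, by omega⟩ with ht'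
          have hprev : q t' = q' t' := ih t' (Or.inr ⟨by simp [ht']; omega, by simp [ht']; omega⟩)
          have hadj : Γ.Adj (q t') (q t) := by
            have h := hq.1 (t : ℕ) (by omega)
            convert h.symm using 2 <;> exact Fin.ext (by simp [ht'])
          have hadj' : Γ.Adj (q' t') (q' t) := by
            have h := hq'.1 (t : ℕ) (by omega)
            convert h.symm using 2 <;> exact Fin.ext (by simp [ht'])
          have hg : F (q t') (q t) = F (q' t') (q' t) := by
            simpa only [code, dif_pos hst] using hgt
          rw [hprev] at hg hadj
          exact hF (q' t') hadj hadj' hg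
    funext t
    rcases le_or_gt (s : ℕ) (t : ℕ) with h | h
    · exact key ((t : ℕ) - s) t (Or.inl ⟨h, rfl⟩)
    · exact key ((s : ℕ) - t) t (Or.inr ⟨h.le, rfl⟩)
  have hfinA : A.Finite := Set.Finite.of_finite_image (Set.toFinite _) hinjOn
  refine ⟨hfinA, ?_⟩
  calc A.encard = (code hd F s '' A).encard := (hinjOn.encard_image).symm
    _ ≤ (Set.univ : Set (Fin n → Fin d)).encard := Set.encard_le_encard (Set.subset_univ _)
    _ = ((d ^ n : ℕ) : ℕ∞) := by
        rw [Set.encard_univ]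
        simp [ENat.card_eq_coe_fintype_card]

private lemma encard_iUnion_le' {ι α : Type*} [Fintype ι] (A : ι → Set α) :
    (⋃ i, A i).encard ≤ ∑ i, (A i).encard := by
  classical
  suffices h : ∀ s : Finset ι, (⋃ i ∈ s, A i).encard ≤ ∑ i ∈ s, (A i).encard by
    have := h Finset.univ
    simpa using this
  intro s
  induction s using Finset.induction_on with
  | empty => simp
  | insert _ _ hns ih =>
    rw [Finset.set_biUnion_insert, Finset.sum_insert hns]
    exact (Set.encard_union_le _ _).trans (add_le_add_right ih _)

/-- In a simple graph all of whose vertex degrees are at most `d ≥ 1`, for any fixed simple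
path `p` with `2i` vertices, the set `S` of simple paths with `2j` vertices (as sequences of
pairwise distinct vertices with consecutive vertices adjacent) meeting `p` is finite and has
at most `4·i·j·d^(2j)` elements. -/
theorem card_paths_meeting_fixed_path_le {V : Type*} (Γ : SimpleGraph V)
    (d i j : ℕ) (hd : 1 ≤ d) (hi : 1 ≤ i) (hj : 1 ≤ j)
    (hdeg : ∀ v : V, (Γ.neighborSet v).Finite ∧ (Γ.neighborSet v).ncard ≤ d)
    (p : Fin (2 * i) → V) (hpinj : Function.Injective p)
    (hpadj : ∀ (t : ℕ) (ht : t + 1 < 2 * i),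
      Γ.Adj (p ⟨t, Nat.lt_of_succ_lt ht⟩) (p ⟨t + 1, ht⟩))
    (S : Set (Fin (2 * j) → V))
    (hS : S = {q : Fin (2 * j) → V | Function.Injective q ∧
      (∀ (t : ℕ) (ht : t + 1 < 2 * j),
        Γ.Adj (q ⟨t, Nat.lt_of_succ_lt ht⟩) (q ⟨t + 1, ht⟩)) ∧
      ∃ (s : Fin (2 * j)) (u : Fin (2 * i)), q s = p u}) :
    S.Finite ∧ S.ncard ≤ 4 * i * j * d ^ (2 * j) := by
  classical
  set A : Fin (2 * j) × Fin (2 * i) → Set (Fin (2 * j) → V) :=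
    fun su => {q : Fin (2 * j) → V | (∀ (t : ℕ) (ht : t + 1 < 2 * j),
        Γ.Adj (q ⟨t, Nat.lt_of_succ_lt ht⟩) (q ⟨t + 1, ht⟩)) ∧ q su.1 = p su.2} with hAdef
  have hbound := fun su : Fin (2 * j) × Fin (2 * i) =>
    anchored_bound Γ d (2 * j) hd hdeg su.1 (p su.2)
  have hsub : S ⊆ ⋃ su, A su := by
    intro q hq
    rw [hS] at hq
    obtain ⟨hqinj, hqadj, s0, u, hsu⟩ := hq
    exact Set.mem_iUnion.mpr ⟨(s0, u), ⟨hqadj, hsu⟩⟩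
  have hfin : S.Finite :=
    Set.Finite.subset (Set.finite_iUnion fun su => (hbound su).1) hsub
  refine ⟨hfin, ?_⟩
  have henc : S.encard ≤ ((4 * i * j * d ^ (2 * j) : ℕ) : ℕ∞) := by
    calc S.encard ≤ (⋃ su, A su).encard := Set.encard_le_encard hsub
      _ ≤ ∑ su : Fin (2 * j) × Fin (2 * i), (A su).encard := encard_iUnion_le' A
      _ ≤ ∑ _su : Fin (2 * j) × Fin (2 * i), ((d ^ (2 * j) : ℕ) : ℕ∞) :=
          Finset.sum_le_sum fun su _ => (hbound su).2
      _ = ((4 * i * j * d ^ (2 * j) : ℕ) : ℕ∞) := by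
          rw [Finset.sum_const, nsmul_eq_mul]
          simp only [Finset.card_univ, Fintype.card_prod, Fintype.card_fin]
          rw [← Nat.cast_mul, Nat.cast_inj]
          ring
  obtain ⟨-, n₀, he, hle⟩ := Set.encard_le_coe_iff.mp henc
  rw [Set.ncard_def, he, ENat.toNat_coe]
  exact hle
end

section
/- Let d ≥ 1 be an integer and set a_j = (2d)^{−2j} for j ≥ 1. If a real number C satisfies C ≥ (2d)^2 · exp(8·∑_{j=1}^∞ j·2^{−2j}), then for every r ≥ 1 and every 1 ≤ i ≤ r one has C^{−i} ≤ a_i · ∏_{j=1}^r (1 − a_j)^{4ij·d^{2j}}. -/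
lemma exp_neg_two_le (x : ℝ) (hx0 : 0 ≤ x) (hx : x ≤ 1/2) : Real.exp (-(2*x)) ≤ 1 - x := by
  have hmul : Real.exp (-(2*x)) * Real.exp (2*x) = 1 := by
    rw [← Real.exp_add]; ring_nf; exact Real.exp_zero
  nlinarith [Real.add_one_le_exp (2*x), Real.exp_pos (-(2*x)), Real.exp_pos (2*x)]

/-- With `a j = (2d)^(-2j)` for `d ≥ 1`, if the real number `C` satisfies
`C ≥ (2d)² · exp(8·∑_{j=1}^∞ j·2^(-2j))`, then for every `r ≥ 1` and every `1 ≤ i ≤ r`,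
`C^(-i) ≤ a i · ∏_{j=1}^r (1 - a j)^(4·i·j·d^(2j))`. -/
theorem lll_inequality_nonrepetitive (d : ℕ) (hd : 1 ≤ d)
    (a : ℕ → ℝ) (ha : ∀ n : ℕ, a n = ((2 * (d : ℝ)) ^ (2 * n))⁻¹)
    (C : ℝ)
    (hC : (2 * (d : ℝ)) ^ 2 *
        Real.exp (8 * ∑' n : ℕ, ((n : ℝ) + 1) * ((2 : ℝ) ^ (2 * (n + 1)))⁻¹) ≤ C) :
    ∀ r : ℕ, 1 ≤ r → ∀ i : ℕ, 1 ≤ i → i ≤ r →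
      (C ^ i)⁻¹ ≤ a i * ∏ n ∈ Finset.Icc 1 r, (1 - a n) ^ (4 * i * n * d ^ (2 * n)) := by
  intro r hr i hi hir
  set f : ℕ → ℝ := fun n => ((n : ℝ) + 1) * ((2 : ℝ) ^ (2 * (n + 1)))⁻¹ with hf
  set S : ℝ := ∑' n : ℕ, f n with hS
  have hd1 : (1:ℝ) ≤ (d:ℝ) := by exact_mod_cast hd
  have hfeq : ∀ n : ℕ, f n = ((n:ℝ)+1) * ((4:ℝ)⁻¹)^(n+1) := by
    intro n
    have : ((2:ℝ))^(2*(n+1)) = (4:ℝ)^(n+1) := by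
      rw [pow_mul]; norm_num
    simp [hf, this, inv_pow]
  -- summability
  have hg : Summable (fun m : ℕ => (m:ℝ) * ((4:ℝ)⁻¹)^m) := by
    simpa using summable_pow_mul_geometric_of_norm_lt_one (R := ℝ) 1 (r := (4⁻¹:ℝ)) (by norm_num)
  have hsum : Summable f := by
    have h := (summable_nat_add_iff 1).mpr hg
    apply h.congr
    intro n
    rw [hfeq n]
    push_cast
    ring
  have hfnn : ∀ n : ℕ, 0 ≤ f n := by
    intro n; rw [hfeq n]; positivity
  have hSnn : 0 ≤ S := tsum_nonneg hfnn
  have hB : (0:ℝ) < (2*(d:ℝ))^2 * Real.exp (8*S) := by positivity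
  have hC' : (2*(d:ℝ))^2 * Real.exp (8*S) ≤ C := hC
  have h1 : (C^i)⁻¹ ≤ (((2*(d:ℝ))^2 * Real.exp (8*S))^i)⁻¹ := by
    apply inv_anti₀ (pow_pos hB i) (pow_le_pow_left₀ hB.le hC' i)
  apply le_trans h1
  have hBi : (((2*(d:ℝ))^2 * Real.exp (8*S))^i)⁻¹
      = ((2*(d:ℝ))^(2*i))⁻¹ * Real.exp (-(8*(i:ℝ)*S)) := by
    rw [mul_pow, ← Real.exp_nat_mul, mul_inv, ← Real.exp_neg, pow_mul]
    ring_nf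
  rw [hBi, ha i]
  apply mul_le_mul_of_nonneg_left _ (by positivity)
  -- key: exp(-(8 i S)) ≤ ∏ (1 - a n)^(4 i n d^(2n))
  have hagood : ∀ n : ℕ, 1 ≤ n → 0 ≤ a n ∧ a n ≤ 1/2 := by
    intro n hn
    rw [ha n]
    have h2d : (2:ℝ) ≤ 2*(d:ℝ) := by linarith
    have hpow : (2:ℝ) ≤ (2*(d:ℝ))^(2*n) := by
      calc (2:ℝ) ≤ 2*(d:ℝ) := h2d
        _ = (2*(d:ℝ))^1 := (pow_one _).symm
        _ ≤ (2*(d:ℝ))^(2*n) := by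
            apply pow_le_pow_right₀ (by linarith) (by omega)
    constructor
    · positivity
    · rw [inv_le_comm₀ (by linarith) (by norm_num)]; linarith
  have key : ∀ n ∈ Finset.Icc 1 r,
      Real.exp (-(8*(i:ℝ)*(n:ℝ)*((2:ℝ)^(2*n))⁻¹)) ≤ (1 - a n)^(4*i*n*d^(2*n)) := by
    intro n hn
    have hn1 : 1 ≤ n := (Finset.mem_Icc.mp hn).1
    obtain ⟨han0, han⟩ := hagood n hn1
    have hexp : Real.exp (-(8*(i:ℝ)*(n:ℝ)*((2:ℝ)^(2*n))⁻¹))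
        = (Real.exp (-(2 * a n)))^(4*i*n*d^(2*n)) := by
      rw [← Real.exp_nat_mul]
      congr 1
      rw [ha n]
      have hdn : (0:ℝ) < (d:ℝ)^(2*n) := by positivity
      have h2n : (0:ℝ) < (2:ℝ)^(2*n) := by positivity
      have hdecomp : (2*(d:ℝ))^(2*n) = (2:ℝ)^(2*n) * (d:ℝ)^(2*n) := by rw [mul_pow]
      push_cast
      rw [hdecomp]
      field_simp
      ring
    rw [hexp]
    exact pow_le_pow_left₀ (Real.exp_pos _).le (exp_neg_two_le (a n) han0 han) _
  calc Real.exp (-(8*(i:ℝ)*S))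
      ≤ Real.exp (∑ n ∈ Finset.Icc 1 r, -(8*(i:ℝ)*(n:ℝ)*((2:ℝ)^(2*n))⁻¹)) := by
        rw [Real.exp_le_exp]
        have heq : ∑ n ∈ Finset.Icc 1 r, -(8*(i:ℝ)*(n:ℝ)*((2:ℝ)^(2*n))⁻¹)
            = -(8*(i:ℝ) * ∑ n ∈ Finset.Icc 1 r, (n:ℝ)*((2:ℝ)^(2*n))⁻¹) := by
          rw [Finset.mul_sum, ← Finset.sum_neg_distrib]
          exact Finset.sum_congr rfl (fun n _ => by ring)
        rw [heq, neg_le_neg_iff]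
        have hle : ∑ n ∈ Finset.Icc 1 r, (n:ℝ)*((2:ℝ)^(2*n))⁻¹ ≤ S := by
          have : ∑ n ∈ Finset.Icc 1 r, (n:ℝ)*((2:ℝ)^(2*n))⁻¹
              = ∑ k ∈ Finset.range r, f k := by
            rw [← Finset.Ico_add_one_right_eq_Icc, Finset.sum_Ico_eq_sum_range]
            refine Finset.sum_congr rfl (fun k _ => ?_)
            rw [Nat.add_comm 1 k, hf]
            push_cast
            ring
          rw [this]
          exact Summable.sum_le_tsum _ (fun k _ => hfnn k) hsum
        have h8i : (0:ℝ) ≤ 8*(i:ℝ) := by positivity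
        exact mul_le_mul_of_nonneg_left hle h8i
    _ = ∏ n ∈ Finset.Icc 1 r, Real.exp (-(8*(i:ℝ)*(n:ℝ)*((2:ℝ)^(2*n))⁻¹)) := Real.exp_sum _ _
    _ ≤ ∏ n ∈ Finset.Icc 1 r, (1 - a n)^(4*i*n*d^(2*n)) :=
        Finset.prod_le_prod (fun n _ => (Real.exp_pos _).le) key
end

section
/- (Elek.) Let G be a finitely generated infinite group. For every URS Z ⊆ Sub(G) there exists a compact metrizable space X with a minimal action of G by homeomorphisms such that the stabilizer map x ↦ G_x (with values in Sub(G)) is continuous on X and its image equals Z; in particular Z is the stability system of the minimal system (X, G). -/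
set_option linter.unusedSectionVars false
set_option maxHeartbeats 1000000


/-- The set of characteristic functions of subgroups of `G` inside `{0,1}^G = G → Bool`
(with the product topology); this is the space `Sub(G)`. -/
def SubChar (G : Type*) [Group G] : Set (G → Bool) :=
  {ω | ω 1 = true ∧ (∀ g : G, ω g = true → ω g⁻¹ = true) ∧
    ∀ g h : G, ω g = true → ω h = true → ω (g * h) = true}

/-- The conjugation action of `G` on `{0,1}^G`: `(g·ω)(h) = ω(g⁻¹hg)`, corresponding to
`H ↦ gHg⁻¹` on characteristic functions of subgroups. -/
def conjChar {G : Type*} [Group G] (g : G) (ω : G → Bool) : G → Bool :=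
  fun h => ω (g⁻¹ * h * g)


section KeyColoring

variable {V : Type*}

private lemma pow_fix (π : Equiv.Perm V) {w : V} (h : π w = w) :
    ∀ n : ℕ, (π ^ n) w = w := by
  intro n
  induction n with
  | zero => rfl
  | succ n ih => rw [pow_succ, Equiv.Perm.mul_apply, h, ih]

private lemma zpow_fix (π : Equiv.Perm V) {w : V} (h : π w = w) :
    ∀ i : ℤ, (π ^ i) w = w := by
  intro i
  induction i using Int.rec with
  | ofNat n => simpa using pow_fix π h n
  | negSucc n =>
    rw [zpow_negSucc]
    apply (Equiv.injective (π ^ (n + 1)))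
    rw [← Equiv.Perm.mul_apply, mul_inv_cancel, Equiv.Perm.one_apply, pow_fix π h (n + 1)]

private lemma exists_nat_pow {π : Equiv.Perm V} {w v : V} {ℓ : ℕ} (hℓ : 0 < ℓ)
    (hfix : (π ^ ℓ) w = w) (h : ∃ i : ℤ, (π ^ i) w = v) : ∃ m : ℕ, (π ^ m) w = v := by
  obtain ⟨i, hi⟩ := h
  refine ⟨(i % (ℓ : ℤ)).toNat, ?_⟩
  have hfixz : (π ^ (ℓ : ℤ)) w = w := by rw [zpow_natCast]; exact hfix
  have h0 : (π ^ ((ℓ : ℤ) * (i / (ℓ : ℤ)))) w = w := by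
    rw [zpow_mul]; exact zpow_fix _ hfixz _
  have key : (π ^ (i % (ℓ : ℤ) + (ℓ : ℤ) * (i / (ℓ : ℤ)))) w = v := by
    rw [Int.emod_add_mul_ediv i (ℓ : ℤ)]; exact hi
  rw [zpow_add, Equiv.Perm.mul_apply, h0] at key
  rw [← key, ← zpow_natCast, Int.toNat_of_nonneg (Int.emod_nonneg i (by exact_mod_cast hℓ.ne'))]

private lemma aper_unique {π : Equiv.Perm V} {w : V}
    (hnp : ¬∃ n : ℕ, 0 < n ∧ (π ^ n) w = w)
    {i j : ℤ} (hij : (π ^ i) w = (π ^ j) w) : i = j := by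
  by_contra hne
  have key : ∀ i j : ℤ, j < i → (π ^ i) w = (π ^ j) w → False := by
    intro i j hlt hij
    have h1 : (π ^ (-j + i)) w = w := by
      have := congrArg (π ^ (-j) : Equiv.Perm V) hij
      rw [← Equiv.Perm.mul_apply, ← Equiv.Perm.mul_apply, ← zpow_add, ← zpow_add,
        neg_add_cancel, zpow_zero, Equiv.Perm.one_apply] at this
      exact this
    have hpos : 0 < -j + i := by omega
    refine hnp ⟨(-j + i).toNat, by omega, ?_⟩
    rw [← zpow_natCast, Int.toNat_of_nonneg hpos.le]
    exact h1
  rcases lt_or_gt_of_ne hne with h | h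
  · exact key j i h hij.symm
  · exact key i j h hij

open Classical in
private noncomputable def colAux (π : Equiv.Perm V) (w v : V) : Bool × Bool :=
  if hp : ∃ n : ℕ, 0 < n ∧ (π ^ n) w = w then
    if hv : ∃ m : ℕ, (π ^ m) w = v then
      (decide (Nat.find hv % 2 = 1),
       decide (Nat.find hv = Nat.find hp - 1 ∧ Nat.find hp % 2 = 1))
    else (false, false)
  else
    if hq : ∃ i : ℤ, (π ^ i) w = v then (decide (hq.choose % 2 = 1), false)
    else (false, false)

private lemma key_coloring (π : Equiv.Perm V) :
    ∃ c : V → Bool × Bool, ∀ v, π v ≠ v → c (π v) ≠ c v := by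
  classical
  let s : Setoid V :=
    ⟨fun a b => ∃ i : ℤ, (π ^ i) a = b,
      ⟨fun a => ⟨0, rfl⟩,
       by
        rintro a b ⟨i, rfl⟩
        exact ⟨-i, by rw [← Equiv.Perm.mul_apply, ← zpow_add, neg_add_cancel, zpow_zero,
          Equiv.Perm.one_apply]⟩,
       by
        rintro a b c ⟨i, rfl⟩ ⟨j, rfl⟩
        exact ⟨j + i, by rw [zpow_add, Equiv.Perm.mul_apply]⟩⟩⟩
  let r : V → V := fun v => Quotient.out (Quotient.mk s v)
  have hr : ∀ v, ∃ i : ℤ, (π ^ i) (r v) = v := fun v => Quotient.mk_out (s := s) v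
  have hrπ : ∀ v, r (π v) = r v := by
    intro v
    show Quotient.out (Quotient.mk s (π v)) = Quotient.out (Quotient.mk s v)
    congr 1
    exact Quotient.sound ⟨-1, by simp [zpow_neg_one]⟩
  refine ⟨fun v => colAux π (r v) v, ?_⟩
  intro v hv
  simp only []
  rw [hrπ v]
  set w := r v with hw
  obtain ⟨i0, hi0⟩ := hr v
  show colAux π w (π v) ≠ colAux π w v
  by_cases hp : ∃ n : ℕ, 0 < n ∧ (π ^ n) w = w
  · -- periodic case
    obtain ⟨hℓpos, hℓfix⟩ := Nat.find_spec hp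
    set ℓ := Nat.find hp with hℓdef
    have hv1 : ∃ m : ℕ, (π ^ m) w = v := exists_nat_pow hℓpos hℓfix ⟨i0, hi0⟩
    have hv2 : ∃ m : ℕ, (π ^ m) w = π v :=
      exists_nat_pow hℓpos hℓfix
        ⟨1 + i0, by rw [zpow_add, Equiv.Perm.mul_apply, hi0, zpow_one]⟩
    set p := Nat.find hv1 with hpdef
    set p' := Nat.find hv2 with hp'def
    have hpw : (π ^ p) w = v := Nat.find_spec hv1
    have hp'w : (π ^ p') w = π v := Nat.find_spec hv2
    have hplt : p < ℓ := by
      by_contra hle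
      push_neg at hle
      have hc : (π ^ (p - ℓ)) w = v := by
        have hcalc : (π ^ (p - ℓ + ℓ)) w = v := by rw [Nat.sub_add_cancel hle]; exact hpw
        rwa [pow_add, Equiv.Perm.mul_apply, hℓfix] at hcalc
      have := Nat.find_min' hv1 hc
      omega
    have hℓ2 : 2 ≤ ℓ := by
      rcases Nat.lt_or_ge ℓ 2 with h2 | h2
      · exfalso
        have hℓ1 : ℓ = 1 := by omega
        have hπw : π w = w := by
          have := hℓfix
          rw [hℓ1, pow_one] at this
          exact this
        have hvw : v = w := by rw [← hpw, pow_fix π hπw]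
        exact hv (by rw [hvw, hπw])
      · exact h2
    have hINJ : ∀ m1 m2 : ℕ, m1 < m2 → m2 - m1 < ℓ → (π ^ m1) w ≠ (π ^ m2) w := by
      intro m1 m2 hlt hdiff heq
      have hfix2 : (π ^ (m2 - m1)) w = w := by
        apply Equiv.injective (π ^ m1)
        have hc : (π ^ (m1 + (m2 - m1))) w = (π ^ m2) w := by congr 2; omega
        rw [pow_add, Equiv.Perm.mul_apply] at hc
        rw [hc, ← heq]
      exact Nat.find_min hp hdiff ⟨by omega, hfix2⟩
    have hple : p' ≤ p + 1 :=
      Nat.find_min' hv2 (by rw [pow_succ', Equiv.Perm.mul_apply, hpw])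
    by_cases hcase : p + 1 = ℓ
    · -- wrap-around
      have hπvw : π v = w := by
        rw [← hpw, ← Equiv.Perm.mul_apply, ← pow_succ', hcase, hℓfix]
      have hp'0 : p' = 0 := by
        have : p' ≤ 0 := Nat.find_min' hv2 (by rw [pow_zero, Equiv.Perm.one_apply, hπvw])
        omega
      show colAux π w (π v) ≠ colAux π w v
      rw [colAux, colAux, dif_pos hp, dif_pos hv2, dif_pos hp, dif_pos hv1]
      intro heq
      rw [Prod.mk.injEq] at heq
      obtain ⟨h1, h2⟩ := heq
      rw [decide_eq_decide] at h1 h2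
      rw [← hℓdef] at h2
      omega
    · -- no wrap
      have hp1lt : p + 1 < ℓ := by omega
      have hp'eq : p' = p + 1 := by
        rcases Nat.lt_or_ge p' (p + 1) with hlt | hge
        · exfalso
          rcases Nat.eq_zero_or_pos p' with h0 | hpos
          · -- w = π v
            have hwπv : w = π v := by rw [← hp'w, h0, pow_zero, Equiv.Perm.one_apply]
            have hl1 : (π ^ (ℓ - 1)) w = v := by
              apply Equiv.injective π
              have : (π ^ (ℓ - 1 + 1)) w = w := by rw [Nat.sub_add_cancel (by omega)]; exact hℓfix
              rw [pow_succ', Equiv.Perm.mul_apply] at this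
              rw [this, hwπv]
            have hpl : p ≤ ℓ - 1 := Nat.find_min' hv1 hl1
            rcases Nat.lt_or_ge p (ℓ - 1) with hplt2 | hpge
            · exact hINJ p (ℓ - 1) hplt2 (by omega) (by rw [hpw, hl1])
            · omega
          · have : (π ^ (p' - 1)) w = v := by
              apply Equiv.injective π
              have hc : (π ^ (p' - 1 + 1)) w = π v := by rw [Nat.sub_add_cancel hpos]; exact hp'w
              rw [pow_succ', Equiv.Perm.mul_apply] at hc
              rw [hc]
            have := Nat.find_min' hv1 this
            omega
        · omega
      show colAux π w (π v) ≠ colAux π w v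
      rw [colAux, colAux, dif_pos hp, dif_pos hv2, dif_pos hp, dif_pos hv1]
      intro heq
      rw [Prod.mk.injEq] at heq
      obtain ⟨h1, h2⟩ := heq
      rw [decide_eq_decide] at h1 h2
      rw [← hℓdef] at h2
      omega
  · -- aperiodic case
    have hq1 : ∃ i : ℤ, (π ^ i) w = v := ⟨i0, hi0⟩
    have hq2 : ∃ i : ℤ, (π ^ i) w = π v :=
      ⟨1 + i0, by rw [zpow_add, Equiv.Perm.mul_apply, hi0, zpow_one]⟩
    have h1 : (π ^ hq1.choose) w = v := hq1.choose_spec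
    have h2 : (π ^ hq2.choose) w = π v := hq2.choose_spec
    have hrel : hq2.choose = 1 + hq1.choose := by
      apply aper_unique hp
      rw [h2, zpow_add, Equiv.Perm.mul_apply, h1, zpow_one]
    show colAux π w (π v) ≠ colAux π w v
    rw [colAux, colAux, dif_neg hp, dif_pos hq2, dif_neg hp, dif_pos hq1]
    intro heq
    rw [Prod.mk.injEq] at heq
    obtain ⟨hh1, _⟩ := heq
    rw [decide_eq_decide] at hh1
    omega

end KeyColoring


private lemma countable_of_fg {G : Type*} [Group G]
    (hfg : ∃ S : Finset G, Subgroup.closure (S : Set G) = ⊤) : Countable G := by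
  obtain ⟨S, hS⟩ := hfg
  classical
  let f : FreeGroup {x // x ∈ (S : Set G)} →* G := FreeGroup.lift Subtype.val
  have hsurj : Function.Surjective f := by
    have hrange : (S : Set G) ⊆ (f.range : Set G) := by
      intro x hx
      exact ⟨FreeGroup.of ⟨x, hx⟩, FreeGroup.lift_apply_of⟩
    have : Subgroup.closure (S : Set G) ≤ f.range := (Subgroup.closure_le _).mpr hrange
    rw [hS] at this
    intro g
    obtain ⟨y, hy⟩ := this (Subgroup.mem_top g)
    exact ⟨y, hy⟩
  have hc : Countable (FreeGroup {x // x ∈ (S : Set G)}) :=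
    FreeGroup.toWord_injective.countable
  exact hsurj.countable

section ElekAux

variable {G : Type*} [Group G]

/-- The ambient product space: a pair (subgroup char function, coloring data). -/
private abbrev ElekT (G : Type*) := (G → Bool) × (G → G × Bool → Bool)

private def elekAct (g : G) (x : ElekT G) : ElekT G :=
  (conjChar g x.1, fun k => x.2 (g⁻¹ * k))

private lemma elekAct_one (x : ElekT G) : elekAct 1 x = x := by
  cases x with
  | mk ω A =>
    unfold elekAct conjChar
    simp

private lemma elekAct_mul (g h : G) (x : ElekT G) :
    elekAct (g * h) x = elekAct g (elekAct h x) := by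
  cases x with
  | mk ω A =>
    unfold elekAct conjChar
    simp [mul_assoc]

private lemma continuous_elekAct (g : G) : Continuous (elekAct (G := G) g) := by
  unfold elekAct conjChar
  refine Continuous.prodMk ?_ ?_
  · exact continuous_pi fun h => (continuous_apply _).comp continuous_fst
  · exact continuous_pi fun k => (continuous_apply _).comp continuous_snd


private lemma continuous_eval1 (h : G) : Continuous fun x : ElekT G => x.1 h := by
  exact (continuous_apply h).comp continuous_fst

private lemma continuous_eval2 (a : G) (i : G × Bool) :
    Continuous fun x : ElekT G => x.2 a i := by
  exact (continuous_apply i).comp ((continuous_apply a).comp continuous_snd)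

private lemma isClosed_fstEq (h : G) (b : Bool) : IsClosed {x : ElekT G | x.1 h = b} := by
  show IsClosed ((fun x : ElekT G => x.1 h) ⁻¹' {b})
  exact (isClosed_discrete _).preimage (continuous_eval1 h)

private lemma isClosed_sndNe (a c : G) (i : G × Bool) :
    IsClosed {x : ElekT G | x.2 a i ≠ x.2 c i} := by
  show IsClosed ((fun x : ElekT G => (x.2 a i, x.2 c i)) ⁻¹' {p : Bool × Bool | p.1 ≠ p.2})
  exact (isClosed_discrete _).preimage ((continuous_eval2 a i).prodMk (continuous_eval2 c i))

/-- The closed invariant set of "coset-colored" points over `Z`. -/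
private def ElekY (Z : Set (G → Bool)) : Set (ElekT G) :=
  {x | x.1 ∈ Z ∧ (∀ h k : G, ∀ i : G × Bool, x.1 h = true → x.2 (h * k) i = x.2 k i) ∧
    ∀ g h : G, x.1 (h⁻¹ * g * h) = false →
      ∃ b : Bool, x.2 (h⁻¹ * g⁻¹) (g, b) ≠ x.2 h⁻¹ (g, b)}

private lemma isClosed_ElekY (Z : Set (G → Bool)) (hZcl : IsClosed Z) :
    IsClosed (ElekY (G := G) Z) := by
  have h1 : IsClosed {x : ElekT G | x.1 ∈ Z} := hZcl.preimage continuous_fst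
  have h2 : IsClosed {x : ElekT G |
      ∀ h k : G, ∀ i : G × Bool, x.1 h = true → x.2 (h * k) i = x.2 k i} := by
    have : {x : ElekT G | ∀ h k : G, ∀ i : G × Bool, x.1 h = true → x.2 (h * k) i = x.2 k i} =
        ⋂ (h : G) (k : G) (i : G × Bool),
          ({x : ElekT G | x.1 h = false} ∪ {x : ElekT G | x.2 (h * k) i = x.2 k i}) := by
      ext x
      simp only [Set.mem_setOf_eq, Set.mem_iInter, Set.mem_union]
      refine forall_congr' fun h => forall_congr' fun k => forall_congr' fun i => ?_
      cases hb : x.1 h <;> simp [hb]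
    rw [this]
    refine isClosed_iInter fun h => isClosed_iInter fun k => isClosed_iInter fun i =>
      IsClosed.union ?_ ?_
    · exact isClosed_fstEq h false
    · exact isClosed_eq (continuous_eval2 (h * k) i) (continuous_eval2 k i)
  have h3 : IsClosed {x : ElekT G | ∀ g h : G, x.1 (h⁻¹ * g * h) = false →
      ∃ b : Bool, x.2 (h⁻¹ * g⁻¹) (g, b) ≠ x.2 h⁻¹ (g, b)} := by
    have : {x : ElekT G | ∀ g h : G, x.1 (h⁻¹ * g * h) = false →
        ∃ b : Bool, x.2 (h⁻¹ * g⁻¹) (g, b) ≠ x.2 h⁻¹ (g, b)} =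
        ⋂ (g : G) (h : G),
          ({x : ElekT G | x.1 (h⁻¹ * g * h) = true} ∪
            ({x : ElekT G | x.2 (h⁻¹ * g⁻¹) (g, false) ≠ x.2 h⁻¹ (g, false)} ∪
             {x : ElekT G | x.2 (h⁻¹ * g⁻¹) (g, true) ≠ x.2 h⁻¹ (g, true)})) := by
      ext x
      simp only [Set.mem_setOf_eq, Set.mem_iInter, Set.mem_union]
      refine forall_congr' fun g => forall_congr' fun h => ?_
      cases hb : x.1 (h⁻¹ * g * h) <;> simp [hb, Bool.exists_bool, or_comm]
    rw [this]
    refine isClosed_iInter fun g => isClosed_iInter fun h =>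
      IsClosed.union ?_ (IsClosed.union ?_ ?_)
    · exact isClosed_fstEq (h⁻¹ * g * h) true
    · exact isClosed_sndNe (h⁻¹ * g⁻¹) h⁻¹ (g, false)
    · exact isClosed_sndNe (h⁻¹ * g⁻¹) h⁻¹ (g, true)
  exact h1.inter (h2.inter h3)

private lemma bool_eq_of_iff {a b : Bool} (h : a = true ↔ b = true) : a = b := by
  revert h; revert a b; decide

private lemma elekAct_mem_ElekY {Z : Set (G → Bool)}
    (hZinv : ∀ g : G, ∀ ω ∈ Z, conjChar g ω ∈ Z)
    (g₀ : G) {x : ElekT G} (hx : x ∈ ElekY Z) : elekAct g₀ x ∈ ElekY Z := by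
  obtain ⟨h1, h2, h3⟩ := hx
  refine ⟨hZinv g₀ _ h1, ?_, ?_⟩
  · intro h k i hh
    show x.2 (g₀⁻¹ * (h * k)) i = x.2 (g₀⁻¹ * k) i
    have hh' : x.1 (g₀⁻¹ * h * g₀) = true := hh
    have := h2 (g₀⁻¹ * h * g₀) (g₀⁻¹ * k) i hh'
    rw [← this]
    congr 1
    group
  · intro g h hfalse
    have hfalse' : x.1 ((h * g₀)⁻¹ * g * (h * g₀)) = false := by
      have heq : (h * g₀)⁻¹ * g * (h * g₀) = g₀⁻¹ * (h⁻¹ * g * h) * g₀ := by group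
      rw [heq]
      exact hfalse
    obtain ⟨b, hb⟩ := h3 g (h * g₀) hfalse'
    refine ⟨b, ?_⟩
    show x.2 (g₀⁻¹ * (h⁻¹ * g⁻¹)) (g, b) ≠ x.2 (g₀⁻¹ * h⁻¹) (g, b)
    have e1 : g₀⁻¹ * (h⁻¹ * g⁻¹) = (h * g₀)⁻¹ * g⁻¹ := by group
    have e2 : g₀⁻¹ * h⁻¹ = (h * g₀)⁻¹ := by group
    rw [e1, e2]
    exact hb

private lemma elek_fix_iff {Z : Set (G → Bool)} (hZsub : Z ⊆ SubChar G) {x : ElekT G}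
    (hx : x ∈ ElekY Z) (g : G) : elekAct g x = x ↔ x.1 g = true := by
  obtain ⟨hxZ, h2, h3⟩ := hx
  obtain ⟨hω1, hωinv, hωmul⟩ := hZsub hxZ
  constructor
  · intro heq
    by_contra hng
    rw [Bool.not_eq_true] at hng
    obtain ⟨b, hb⟩ := h3 g 1 (by simpa using hng)
    apply hb
    have hsnd := congrArg Prod.snd heq
    have hpt := congrFun (congrFun hsnd 1) (g, b)
    simpa [elekAct] using hpt
  · intro hg
    have hfst : conjChar g x.1 = x.1 := by
      funext h
      apply bool_eq_of_iff
      constructor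
      · intro hmem
        have hh := hωmul _ _ (hωmul _ _ hg hmem) (hωinv _ hg)
        have heq : g * (g⁻¹ * h * g) * g⁻¹ = h := by group
        rwa [heq] at hh
      · intro hmem
        exact hωmul _ _ (hωmul _ _ (hωinv _ hg) hmem) hg
    have hsnd : (fun k => x.2 (g⁻¹ * k)) = x.2 := by
      funext k
      exact funext fun i => h2 g⁻¹ k i (hωinv _ hg)
    show (conjChar g x.1, fun k => x.2 (g⁻¹ * k)) = x
    rw [hfst, hsnd]


private lemma ElekY_nonempty {Z : Set (G → Bool)} (hZsub : Z ⊆ SubChar G) (hZne : Z.Nonempty) :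
    (ElekY (G := G) Z).Nonempty := by
  classical
  obtain ⟨ω₀, hω₀Z⟩ := hZne
  obtain ⟨hω1, hωinv, hωmul⟩ := hZsub hω₀Z
  let s : Setoid G :=
    ⟨fun a b => ω₀ (a * b⁻¹) = true,
      ⟨fun a => by simpa using hω1,
       fun {a b} hab => by
         have hi := hωinv _ hab
         simpa [mul_inv_rev] using hi,
       fun {a b c} hab hbc => by
         have hm := hωmul _ _ hab hbc
         simpa [mul_assoc] using hm⟩⟩
  have hmapwd : ∀ (t : G) (a b : G), s.r a b → s.r (a * t) (b * t) := by
    intro t a b hab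
    show ω₀ ((a * t) * (b * t)⁻¹) = true
    have heq : (a * t) * (b * t)⁻¹ = a * b⁻¹ := by group
    rw [heq]
    exact hab
  let ρ : G → Equiv.Perm (Quotient s) := fun g =>
    { toFun := Quotient.map (fun k => k * g⁻¹) (hmapwd g⁻¹)
      invFun := Quotient.map (fun k => k * g) (hmapwd g)
      left_inv := by
        intro q
        induction q using Quotient.inductionOn with
        | h k => simp [Quotient.map_mk]
      right_inv := by
        intro q
        induction q using Quotient.inductionOn with
        | h k => simp [Quotient.map_mk] }
  choose c hc using fun g => key_coloring (ρ g)
  refine ⟨(ω₀, fun k gb =>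
    if gb.2 then (c gb.1 (Quotient.mk s k)).1 else (c gb.1 (Quotient.mk s k)).2),
    hω₀Z, ?_, ?_⟩
  · intro h k i hh
    have hq : Quotient.mk s (h * k) = Quotient.mk s k := by
      apply Quotient.sound
      show ω₀ ((h * k) * k⁻¹) = true
      have heq : (h * k) * k⁻¹ = h := by group
      rw [heq]
      exact hh
    show (if i.2 then (c i.1 (Quotient.mk s (h * k))).1 else (c i.1 (Quotient.mk s (h * k))).2) =
      (if i.2 then (c i.1 (Quotient.mk s k)).1 else (c i.1 (Quotient.mk s k)).2)
    rw [hq]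
  · intro g h hfalse
    set v : Quotient s := Quotient.mk s h⁻¹ with hv
    have hvg : Quotient.mk s (h⁻¹ * g⁻¹) = ρ g v := by
      show Quotient.mk s (h⁻¹ * g⁻¹) =
        Quotient.map (fun k => k * g⁻¹) (hmapwd g⁻¹) (Quotient.mk s h⁻¹)
      rw [Quotient.map_mk]
    have hmove : ρ g v ≠ v := by
      intro hvv
      rw [← hvg] at hvv
      have hrel : s.r (h⁻¹ * g⁻¹) h⁻¹ := Quotient.exact hvv
      have hrel' : ω₀ ((h⁻¹ * g⁻¹) * (h⁻¹)⁻¹) = true := hrel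
      have hi := hωinv _ hrel'
      have heq : ((h⁻¹ * g⁻¹) * (h⁻¹)⁻¹)⁻¹ = h⁻¹ * g * h := by group
      rw [heq] at hi
      have hfalse2 : ω₀ (h⁻¹ * g * h) = false := hfalse
      rw [hi] at hfalse2
      exact absurd hfalse2 (by decide)
    have hcol := hc g v hmove
    by_cases hb1 : (c g (ρ g v)).1 = (c g v).1
    · have hb2 : (c g (ρ g v)).2 ≠ (c g v).2 := fun hb2 => hcol (Prod.ext hb1 hb2)
      refine ⟨false, ?_⟩
      show (if false then (c g (Quotient.mk s (h⁻¹ * g⁻¹))).1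
          else (c g (Quotient.mk s (h⁻¹ * g⁻¹))).2) ≠
        (if false then (c g (Quotient.mk s h⁻¹)).1 else (c g (Quotient.mk s h⁻¹)).2)
      simpa [hvg, ← hv] using hb2
    · refine ⟨true, ?_⟩
      show (if true then (c g (Quotient.mk s (h⁻¹ * g⁻¹))).1
          else (c g (Quotient.mk s (h⁻¹ * g⁻¹))).2) ≠
        (if true then (c g (Quotient.mk s h⁻¹)).1 else (c g (Quotient.mk s h⁻¹)).2)
      simpa [hvg, ← hv] using hb1


private lemma exists_minimal_subsystem {Z : Set (G → Bool)} (hZcl : IsClosed Z)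
    (hZsub : Z ⊆ SubChar G) (hZne : Z.Nonempty)
    (hZinv : ∀ g : G, ∀ ω ∈ Z, conjChar g ω ∈ Z) :
    ∃ m : Set (ElekT G), m.Nonempty ∧ IsClosed m ∧ m ⊆ ElekY Z ∧
      (∀ g : G, ∀ x ∈ m, elekAct g x ∈ m) ∧
      (∀ W : Set (ElekT G), W.Nonempty → IsClosed W →
        (∀ g : G, ∀ x ∈ W, elekAct g x ∈ W) → W ⊆ m → W = m) := by
  classical
  let 𝒮 : Set (Set (ElekT G)) :=
    {W | W.Nonempty ∧ IsClosed W ∧ W ⊆ ElekY Z ∧ ∀ g : G, ∀ x ∈ W, elekAct g x ∈ W}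
  have hYin : ElekY Z ∈ 𝒮 :=
    ⟨ElekY_nonempty hZsub hZne, isClosed_ElekY Z hZcl, subset_rfl,
      fun g x hx => elekAct_mem_ElekY hZinv g hx⟩
  have hchain : ∀ ch ⊆ 𝒮, IsChain (· ⊆ ·) ch → ch.Nonempty →
      ∃ lb ∈ 𝒮, ∀ s ∈ ch, lb ⊆ s := by
    intro ch hch𝒮 hchain hchne
    refine ⟨⋂₀ ch, ⟨?_, ?_, ?_, ?_⟩, fun s hs => Set.sInter_subset_of_mem hs⟩
    · haveI : Nonempty ↥ch := hchne.to_subtype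
      apply IsCompact.nonempty_sInter_of_directed_nonempty_isCompact_isClosed
      · intro U hU V hV
        rcases hchain.total hU hV with h | h
        · exact ⟨U, hU, subset_rfl, h⟩
        · exact ⟨V, hV, h, subset_rfl⟩
      · exact fun U hU => (hch𝒮 hU).1
      · exact fun U hU => (hch𝒮 hU).2.1.isCompact
      · exact fun U hU => (hch𝒮 hU).2.1
    · exact isClosed_sInter fun U hU => (hch𝒮 hU).2.1
    · obtain ⟨U₀, hU₀⟩ := hchne
      exact (Set.sInter_subset_of_mem hU₀).trans (hch𝒮 hU₀).2.2.1
    · intro g x hx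
      rw [Set.mem_sInter] at hx ⊢
      exact fun U hU => (hch𝒮 hU).2.2.2 g x (hx U hU)
  obtain ⟨m, hmY, hmmin⟩ := zorn_superset_nonempty 𝒮 hchain _ hYin
  refine ⟨m, hmmin.1.1, hmmin.1.2.1, hmmin.1.2.2.1, hmmin.1.2.2.2, ?_⟩
  intro W hWne hWcl hWinv hWm
  exact subset_antisymm hWm (hmmin.2 ⟨hWne, hWcl, hWm.trans hmmin.1.2.2.1, hWinv⟩ hWm)

end ElekAux


/-- **Elek's theorem.** Let `G` be a finitely generated infinite group and let
`Z ⊆ Sub(G)` be a URS (a nonempty closed conjugation-invariant subset with no proper nonempty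
closed invariant subset).  Then there is a compact metrizable space `X` with a minimal action
`φ` of `G` by homeomorphisms whose stabilizer map `St` is continuous with image exactly `Z`;
in particular `Z` is the stability system of the minimal system `(X, G)`. -/
theorem elek_urs_realization {G : Type*} [Group G] [Infinite G]
    (hfg : ∃ S : Finset G, Subgroup.closure (S : Set G) = ⊤)
    (Z : Set (G → Bool)) (hZsub : Z ⊆ SubChar G) (hZcl : IsClosed Z) (hZne : Z.Nonempty)
    (hZinv : ∀ g : G, ∀ ω ∈ Z, conjChar g ω ∈ Z)
    (hZmin : ∀ W : Set (G → Bool), W ⊆ Z → W.Nonempty → IsClosed W →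
      (∀ g : G, ∀ ω ∈ W, conjChar g ω ∈ W) → W = Z) :
    ∃ (X : Type) (t : TopologicalSpace X) (φ : G → X → X),
      @CompactSpace X t ∧ @TopologicalSpace.MetrizableSpace X t ∧
      (∀ g : G, @Continuous X X t t (φ g)) ∧
      (∀ x : X, φ 1 x = x) ∧
      (∀ g h : G, ∀ x : X, φ (g * h) x = φ g (φ h x)) ∧
      (∀ x : X, @Dense X t (Set.range fun g : G => φ g x)) ∧
      ∃ St : X → G → Bool,
        (∀ (x : X) (g : G), St x g = true ↔ φ g x = x) ∧
        @Continuous X (G → Bool) t _ St ∧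
        Set.range St = Z := by
  classical
  have hcount : Countable G := countable_of_fg hfg
  obtain ⟨e⟩ : Nonempty (G ≃ ℕ) := nonempty_equiv_of_countable
  obtain ⟨e2⟩ : Nonempty ((G × Bool) ≃ ℕ) := nonempty_equiv_of_countable
  obtain ⟨m, hmne, hmcl, hmsub, hminv, hmmin⟩ :=
    exists_minimal_subsystem hZcl hZsub hZne hZinv
  let Φ : ElekT G ≃ₜ ((ℕ → Bool) × (ℕ → ℕ → Bool)) :=
    (Homeomorph.piCongrLeft (Y := fun _ : ℕ => Bool) e).prodCongr
      ((Homeomorph.piCongrRight fun _ : G =>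
          Homeomorph.piCongrLeft (Y := fun _ : ℕ => Bool) e2).trans
        (Homeomorph.piCongrLeft (Y := fun _ : ℕ => ℕ → Bool) e))
  let S : Set ((ℕ → Bool) × (ℕ → ℕ → Bool)) := Φ '' m
  have hmem_symm : ∀ x : ↥S, Φ.symm ↑x ∈ m := by
    rintro ⟨x, y, hy, rfl⟩
    simpa using hy
  have hS_mem : ∀ (g : G) (x : ↥S), Φ (elekAct g (Φ.symm ↑x)) ∈ S :=
    fun g x => Set.mem_image_of_mem Φ (hminv g _ (hmem_symm x))
  let φ : G → ↥S → ↥S := fun g x => ⟨Φ (elekAct g (Φ.symm ↑x)), hS_mem g x⟩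
  refine ⟨↥S, inferInstance, φ, ?_, inferInstance, ?_, ?_, ?_, ?_, ?_⟩
  · exact isCompact_iff_compactSpace.mp ((hmcl.isCompact).image Φ.continuous)
  · intro g
    have h1 : Continuous fun x : ↥S => Φ.symm ↑x :=
      Φ.symm.continuous.comp continuous_subtype_val
    have h2 : Continuous fun x : ↥S => Φ (elekAct g (Φ.symm ↑x)) :=
      Φ.continuous.comp ((continuous_elekAct g).comp h1)
    exact h2.subtype_mk _
  · intro x
    apply Subtype.ext
    show Φ (elekAct 1 (Φ.symm ↑x)) = ↑x
    rw [elekAct_one, Φ.apply_symm_apply]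
  · intro g h x
    apply Subtype.ext
    show Φ (elekAct (g * h) (Φ.symm ↑x)) =
      Φ (elekAct g (Φ.symm (Φ (elekAct h (Φ.symm ↑x)))))
    rw [Φ.symm_apply_apply, elekAct_mul]
  · intro x
    have hy : Φ.symm ↑x ∈ m := hmem_symm x
    set O : Set (ElekT G) := Set.range fun g : G => elekAct g (Φ.symm ↑x) with hO
    have hOsub : O ⊆ m := by
      rintro _ ⟨g, rfl⟩
      exact hminv g _ hy
    have hOne : O.Nonempty := ⟨_, ⟨1, rfl⟩⟩
    have hOcl_inv : ∀ g : G, ∀ z ∈ closure O, elekAct g z ∈ closure O := by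
      intro g z hz
      have himg : elekAct g '' O ⊆ O := by
        rintro _ ⟨_, ⟨h, rfl⟩, rfl⟩
        refine ⟨g * h, ?_⟩
        show elekAct (g * h) (Φ.symm ↑x) = elekAct g (elekAct h (Φ.symm ↑x))
        exact elekAct_mul g h _
      have h1 : elekAct g z ∈ elekAct g '' closure O := Set.mem_image_of_mem _ hz
      have h2 : elekAct g '' closure O ⊆ closure (elekAct g '' O) :=
        image_closure_subset_closure_image (continuous_elekAct g)
      exact closure_mono himg (h2 h1)
    have hmeq : closure O = m :=
      hmmin (closure O) hOne.closure isClosed_closure hOcl_inv (closure_minimal hOsub hmcl)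
    rw [dense_iff_closure_eq, Set.eq_univ_iff_forall]
    intro z
    rw [closure_subtype]
    have himg : (Subtype.val '' Set.range fun g : G => φ g x) = Φ '' O := by
      ext p
      constructor
      · rintro ⟨_, ⟨g, rfl⟩, rfl⟩
        exact ⟨elekAct g (Φ.symm ↑x), ⟨g, rfl⟩, rfl⟩
      · rintro ⟨_, ⟨g, rfl⟩, rfl⟩
        exact ⟨φ g x, ⟨g, rfl⟩, rfl⟩
    rw [himg, ← Φ.image_closure, hmeq]
    exact z.2
  · refine ⟨fun x => (Φ.symm ↑x).1, ?_, ?_, ?_⟩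
    · intro x g
      rw [← elek_fix_iff hZsub (hmsub (hmem_symm x)) g]
      constructor
      · intro h
        apply Subtype.ext
        show Φ (elekAct g (Φ.symm ↑x)) = ↑x
        rw [h, Φ.apply_symm_apply]
      · intro h
        have h' : Φ (elekAct g (Φ.symm ↑x)) = ↑x := congrArg Subtype.val h
        have h'' := congrArg Φ.symm h'
        rwa [Φ.symm_apply_apply] at h''
    · have h1 : Continuous fun x : ↥S => Φ.symm ↑x :=
        Φ.symm.continuous.comp continuous_subtype_val
      exact continuous_fst.comp h1
    · have hπ : Prod.fst '' m = Z := by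
        apply hZmin
        · rintro ω ⟨x, hx, rfl⟩
          exact (hmsub hx).1
        · obtain ⟨x₀, hx₀⟩ := hmne
          exact ⟨x₀.1, Set.mem_image_of_mem _ hx₀⟩
        · exact (hmcl.isCompact.image continuous_fst).isClosed
        · rintro g ω ⟨x, hx, rfl⟩
          exact ⟨elekAct g x, hminv g x hx, rfl⟩
      rw [← hπ]
      ext ω
      constructor
      · rintro ⟨x, rfl⟩
        exact ⟨Φ.symm ↑x, hmem_symm x, rfl⟩
      · rintro ⟨y, hy, rfl⟩
        exact ⟨⟨Φ y, Set.mem_image_of_mem _ hy⟩, by simp⟩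
end

section
/- Let G be a group generated by a finite symmetric set S with e ∉ S, let H ≤ G be a subgroup, and let Γ be the Schreier graph on the right coset space H\G with respect to S. Suppose ω : H\G → K is a nonrepetitive coloring of Γ. If g ∈ G satisfies gHg⁻¹ = H and ω(Hg⁻¹a) = ω(Ha) for all a ∈ G, then g ∈ H. -/
/-- The Schreier graph of `G` on the right coset space `H\G` with respect to a set `S`
of generators: distinct cosets `Ha` and `Hb` are adjacent iff `Hb = Has` for some `s ∈ S`
(for symmetric `S` the symmetrization `fromRel` agrees with this relation). -/
def schreierGraph {G : Type*} [Group G] (H : Subgroup G) (S : Finset G) :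
    SimpleGraph (Quotient (QuotientGroup.rightRel H)) :=
  SimpleGraph.fromRel (fun x y => ∃ s ∈ S, ∃ a : G,
    x = Quotient.mk (QuotientGroup.rightRel H) a ∧
    y = Quotient.mk (QuotientGroup.rightRel H) (a * s))

/-- If `ω` is a nonrepetitive coloring of the Schreier graph of `H\G` (with respect to a
finite symmetric generating set `S` with `e ∉ S`), and `g ∈ G` normalizes `H`
(`gHg⁻¹ = H`) and fixes the coloring (`ω(Hg⁻¹a) = ω(Ha)` for all `a`), then `g ∈ H`. -/
theorem mem_of_fixes_nonrepetitive_schreier_coloring {G K : Type*} [Group G]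
    (S : Finset G) (hsym : ∀ s ∈ S, s⁻¹ ∈ S) (hid : (1 : G) ∉ S)
    (hgen : Subgroup.closure (S : Set G) = ⊤)
    (H : Subgroup G) (ω : Quotient (QuotientGroup.rightRel H) → K)
    (hnr : Nonrepetitive (schreierGraph H S) ω)
    (g : G) (hconj : ∀ x : G, g⁻¹ * x * g ∈ H ↔ x ∈ H)
    (hfix : ∀ a : G, ω (Quotient.mk (QuotientGroup.rightRel H) (g⁻¹ * a)) =
      ω (Quotient.mk (QuotientGroup.rightRel H) a)) :
    g ∈ H := by
  by_contra hg
  set Γ := schreierGraph H S with hΓ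
  let mk : G → Quotient (QuotientGroup.rightRel H) :=
    Quotient.mk (QuotientGroup.rightRel H)
  have hrel : ∀ a b : G, mk a = mk b ↔ b * a⁻¹ ∈ H := by
    intro a b
    constructor
    · intro h
      exact QuotientGroup.rightRel_apply.mp (Quotient.exact h)
    · intro h
      exact Quotient.sound (QuotientGroup.rightRel_apply.mpr h)
  -- the automorphism
  let φ : Quotient (QuotientGroup.rightRel H) → Quotient (QuotientGroup.rightRel H) :=
    Quotient.map' (fun a => g⁻¹ * a) (by
      intro a b hab
      have h1 : b * a⁻¹ ∈ H := QuotientGroup.rightRel_apply.mp hab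
      refine QuotientGroup.rightRel_apply.mpr ?_
      have := (hconj (b * a⁻¹)).mpr h1
      convert this using 1
      group)
  have hφmk : ∀ a : G, φ (mk a) = mk (g⁻¹ * a) := fun a => rfl
  have hφinj : Function.Injective φ := by
    intro x y h
    induction x using Quotient.ind
    induction y using Quotient.ind
    rename_i a b
    rw [hφmk, hφmk, hrel] at h
    refine (hrel a b).mpr ?_
    have := (hconj (b * a⁻¹)).mp (by convert h using 1; group)
    exact this
  have hφfix : ∀ q, φ q ≠ q := by
    intro q
    induction q using Quotient.ind
    rename_i a
    show mk (g⁻¹ * a) ≠ mk a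
    intro h
    have h' := (hrel _ _).mp h
    apply hg
    convert h' using 1
    group
  have hφadj : ∀ {x y}, Γ.Adj x y → Γ.Adj (φ x) (φ y) := by
    intro x y hxy
    rw [hΓ, schreierGraph, SimpleGraph.fromRel_adj] at hxy ⊢
    obtain ⟨hne, hrel'⟩ := hxy
    refine ⟨fun h => hne (hφinj h), ?_⟩
    rcases hrel' with ⟨s, hs, a, rfl, rfl⟩ | ⟨s, hs, a, rfl, rfl⟩
    · exact Or.inl ⟨s, hs, g⁻¹ * a, rfl, by rw [hφmk]; congr 1; group⟩
    · exact Or.inr ⟨s, hs, g⁻¹ * a, rfl, by rw [hφmk]; congr 1; group⟩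
  have hφω : ∀ q, ω (φ q) = ω q := by
    intro q
    induction q using Quotient.ind
    rename_i a
    rw [hφmk]
    exact hfix a
  -- connectedness
  have hreach1 : ∀ b : G, ∀ a : G, Γ.Reachable (mk a) (mk (a * b)) := by
    intro b
    have hb : b ∈ Subgroup.closure (S : Set G) := hgen ▸ Subgroup.mem_top b
    induction hb using Subgroup.closure_induction with
    | mem s hs =>
      intro a
      by_cases h : mk a = mk (a * s)
      · rw [h]
      · refine SimpleGraph.Adj.reachable ?_
        rw [hΓ, schreierGraph, SimpleGraph.fromRel_adj]
        exact ⟨h, Or.inl ⟨s, hs, a, rfl, rfl⟩⟩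
    | one => intro a; rw [mul_one]
    | mul x y hx hy ihx ihy =>
      intro a
      have := (ihx a).trans (ihy (a * x))
      rwa [mul_assoc] at this
    | inv x hx ihx =>
      intro a
      have := (ihx (a * x⁻¹)).symm
      rwa [inv_mul_cancel_right] at this
  have hconn : Γ.Connected := by
    have hne : Nonempty (Quotient (QuotientGroup.rightRel H)) := ⟨mk 1⟩
    rw [SimpleGraph.connected_iff]
    refine ⟨fun x y => ?_, hne⟩
    induction x using Quotient.ind
    induction y using Quotient.ind
    rename_i a b
    have := hreach1 (a⁻¹ * b) a
    rwa [mul_inv_cancel_left] at this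
  -- minimal distance to image
  let D : Set ℕ := Set.range (fun q => Γ.dist q (φ q))
  have hDne : D.Nonempty := ⟨_, ⟨mk 1, rfl⟩⟩
  set n := sInf D with hn
  obtain ⟨v, hv⟩ : ∃ q, Γ.dist q (φ q) = n := Nat.sInf_mem hDne
  have hnle : ∀ q, n ≤ Γ.dist q (φ q) := fun q => Nat.sInf_le ⟨q, rfl⟩
  have hn1 : 1 ≤ n := by
    rw [← hv]
    exact hconn.pos_dist_of_ne (Ne.symm (hφfix v))
  obtain ⟨p, hp⟩ := hconn.exists_walk_length_eq_dist v (φ v)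
  rw [hv] at hp
  set x : ℕ → Quotient (QuotientGroup.rightRel H) := fun i => p.getVert i with hx
  have hx0 : x 0 = v := p.getVert_zero
  have hxn : x n = φ v := by rw [hx]; simp only [← hp]; exact p.getVert_length
  have hxadj : ∀ i, i < n → Γ.Adj (x i) (x (i + 1)) := by
    intro i hi
    exact p.adj_getVert_succ (by omega)
  -- distance bounds along the walk
  have hdistle : ∀ i j, i ≤ j → j ≤ n → Γ.dist (x i) (x j) ≤ j - i := by
    intro i j hij hjn
    induction j with
    | zero => simp [show i = 0 by omega, SimpleGraph.dist_self]
    | succ j ih =>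
      rcases Nat.lt_or_ge i (j + 1) with h | h
      · have h1 : Γ.dist (x i) (x j) ≤ j - i := ih (by omega) (by omega)
        have h2 : Γ.dist (x j) (x (j + 1)) ≤ 1 := by
          have := SimpleGraph.dist_le ((hxadj j (by omega)).toWalk)
          simpa [SimpleGraph.Adj.toWalk] using this
        calc Γ.dist (x i) (x (j+1)) ≤ Γ.dist (x i) (x j) + Γ.dist (x j) (x (j+1)) :=
              hconn.dist_triangle
          _ ≤ (j - i) + 1 := Nat.add_le_add h1 h2
          _ = j + 1 - i := by omega
      · simp [show i = j + 1 by omega, SimpleGraph.dist_self]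
  -- the repetitive path
  set y : ℕ → Quotient (QuotientGroup.rightRel H) :=
    fun i => if i < n then x i else φ (x (i - n)) with hy
  have hyinj : ∀ i j, i < 2 * n → j < 2 * n → i ≠ j → y i ≠ y j := by
    have key : ∀ i j, i < j → j < n → x i ≠ x j := by
      intro i j hij hjn heq
      have h1 : Γ.dist v (x i) ≤ i := by
        have := hdistle 0 i (by omega) (by omega)
        rwa [hx0, Nat.sub_zero] at this
      have h2 : Γ.dist (x j) (φ v) ≤ n - j := by
        have := hdistle j n (by omega) le_rfl
        rwa [hxn] at this
      have h2' : Γ.dist (x i) (φ v) ≤ n - j := by rw [heq]; exact h2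
      have h3 : Γ.dist v (φ v) ≤ i + (n - j) := by
        calc Γ.dist v (φ v) ≤ Γ.dist v (x i) + Γ.dist (x i) (φ v) := hconn.dist_triangle
          _ ≤ i + (n - j) := Nat.add_le_add h1 h2'
      omega
    have keymix : ∀ i j, i < n → j < n → x i ≠ φ (x j) := by
      intro i j hi hj heq
      have hd : Γ.dist (x j) (φ (x j)) < n := by
        rcases Nat.lt_or_ge i j with h | h
        · have := hdistle i j (by omega) (by omega)
          rw [heq, SimpleGraph.dist_comm] at this
          omega
        · have := hdistle j i (by omega) (by omega)
          calc Γ.dist (x j) (φ (x j)) = Γ.dist (x j) (x i) := by rw [heq]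
            _ ≤ i - j := this
            _ < n := by omega
      exact absurd (hnle (x j)) (by omega)
    intro i j hi hj hij
    rw [hy]
    rcases Nat.lt_or_ge i n with h1 | h1 <;> rcases Nat.lt_or_ge j n with h2 | h2
    · simp only [if_pos h1, if_pos h2]
      rcases Nat.lt_or_ge i j with h | h
      · exact key i j h h2
      · exact (key j i (by omega) h1).symm
    · simp only [if_pos h1, if_neg (by omega : ¬ j < n)]
      exact keymix i (j - n) h1 (by omega)
    · simp only [if_neg (by omega : ¬ i < n), if_pos h2]
      exact fun h => keymix j (i - n) h2 (by omega) h.symm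
    · simp only [if_neg (by omega : ¬ i < n), if_neg (by omega : ¬ j < n)]
      intro h
      have := hφinj h
      rcases Nat.lt_or_ge (i - n) (j - n) with h | h
      · exact key (i - n) (j - n) h (by omega) this
      · exact (key (j - n) (i - n) (by omega) (by omega)) this.symm
  have hyadj : ∀ i, i + 1 < 2 * n → Γ.Adj (y i) (y (i + 1)) := by
    intro i hi
    rw [hy]
    rcases Nat.lt_or_ge (i + 1) n with h | h
    · simp only [if_pos (by omega : i < n), if_pos h]
      exact hxadj i (by omega)
    · rcases Nat.lt_or_ge i n with h' | h'
      · -- i = n - 1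
        simp only [if_pos h', if_neg (by omega : ¬ i + 1 < n)]
        have hin : i = n - 1 := by omega
        have : i + 1 - n = 0 := by omega
        rw [this, hx0, ← hxn]
        have := hxadj i (by omega)
        rwa [show i + 1 = n by omega] at this
      · simp only [if_neg (by omega : ¬ i < n), if_neg (by omega : ¬ i + 1 < n)]
        have : i + 1 - n = (i - n) + 1 := by omega
        rw [this]
        exact hφadj (hxadj (i - n) (by omega))
  obtain ⟨i, hi, hne⟩ := hnr n y hn1 hyinj hyadj
  apply hne
  rw [hy]
  simp only [if_pos hi, if_neg (by omega : ¬ n + i < n), Nat.add_sub_cancel_left]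
  exact (hφω (x i)).symm
end

section
/- Let Γ be a connected simple graph and θ an automorphism of Γ with no fixed points. Let a be a vertex minimizing the graph distance dist(v, θ(v)) over all vertices v, set n = dist(a, θ(a)) ≥ 1, and let (a_1, a_2, …, a_{n+1}) be a shortest path from a_1 = a to a_{n+1} = θ(a). Then the sequence (a_1, …, a_n, θ(a_1), …, θ(a_n)) is a simple path in Γ with 2n vertices, i.e. its 2n vertices are pairwise distinct and consecutive vertices are adjacent. -/
/-- Let `θ` be a fixed-point-free automorphism of a connected simple graph `Γ`, let `a` be a
vertex minimizing `dist(v, θ v)`, let `n = dist(a, θ a)` and let `p 0, p 1, …, p n` be a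
shortest path from `a` to `θ a` (a walk of length `n = dist(a, θ a)`).  Then the sequence
`(p 0, …, p (n-1), θ (p 0), …, θ (p (n-1)))` is a simple path with `2n` vertices:
its vertices are pairwise distinct and consecutive vertices are adjacent. -/
theorem simple_path_from_fixed_point_free_automorphism {V : Type*} (Γ : SimpleGraph V)
    (hconn : Γ.Connected) (θ : Γ ≃g Γ) (hfree : ∀ v : V, θ v ≠ v)
    (a : V) (hmin : ∀ v : V, Γ.dist a (θ a) ≤ Γ.dist v (θ v))
    (n : ℕ) (hn : n = Γ.dist a (θ a)) (hn1 : 1 ≤ n)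
    (p : ℕ → V) (hp0 : p 0 = a) (hpn : p n = θ a)
    (hadj : ∀ i, i < n → Γ.Adj (p i) (p (i + 1))) :
    ∃ q : ℕ → V,
      (∀ i, i < n → q i = p i) ∧
      (∀ i, n ≤ i → i < 2 * n → q i = θ (p (i - n))) ∧
      (∀ i j, i < 2 * n → j < 2 * n → i ≠ j → q i ≠ q j) ∧
      (∀ i, i + 1 < 2 * n → Γ.Adj (q i) (q (i + 1))) := by
  -- upper bound on distances along the path
  have hub : ∀ i j, i ≤ j → j ≤ n → Γ.dist (p i) (p j) ≤ j - i := by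
    intro i j hij hjn
    induction j with
    | zero =>
      interval_cases i
      simp [SimpleGraph.dist_self]
    | succ k ih =>
      rcases Nat.eq_or_lt_of_le hij with h | h
      · simp [h, SimpleGraph.dist_self]
      · have h1 : Γ.dist (p i) (p k) ≤ k - i := ih (by omega) (by omega)
        have h2 : Γ.dist (p k) (p (k + 1)) = 1 :=
          (SimpleGraph.dist_eq_one_iff_adj).2 (hadj k (by omega))
        have := hconn.dist_triangle (u := p i) (v := p k) (w := p (k + 1))
        omega
  -- exact distances along the path
  have hkey : ∀ i j, i ≤ j → j ≤ n → Γ.dist (p i) (p j) = j - i := by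
    intro i j hij hjn
    have h1 := hub i j hij hjn
    have h2 := hub 0 i (Nat.zero_le _) (by omega)
    have h3 := hub j n hjn le_rfl
    have ht1 := hconn.dist_triangle (u := p 0) (v := p i) (w := p n)
    have ht2 := hconn.dist_triangle (u := p i) (v := p j) (w := p n)
    have hdn : Γ.dist (p 0) (p n) = n := by rw [hp0, hpn]; omega
    omega
  -- distinctness of p 0 .. p n
  have hpdist : ∀ i j, i < j → j ≤ n → p i ≠ p j := by
    intro i j hij hjn heq
    have := hkey i j (le_of_lt hij) hjn
    rw [heq, SimpleGraph.dist_self] at this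
    omega
  -- p i ≠ θ (p k) for i, k < n
  have hmix : ∀ i k, i < n → k < n → p i ≠ θ (p k) := by
    intro i k hi hk heq
    have hmk : n ≤ Γ.dist (p k) (θ (p k)) := hn ▸ hmin (p k)
    rw [← heq] at hmk
    rcases le_total i k with h | h
    · have := hkey i k h (by omega)
      rw [SimpleGraph.dist_comm] at hmk
      omega
    · have := hkey k i h (by omega)
      omega
  refine ⟨fun i => if i < n then p i else θ (p (i - n)), fun i hi => if_pos hi,
    fun i hi _ => if_neg (by omega), ?_, ?_⟩
  · intro i j hi2 hj2 hij heq
    by_cases hi : i < n <;> by_cases hj : j < n <;>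
      simp only [if_pos, if_neg, hi, hj, if_true, if_false] at heq
    · rcases Nat.lt_or_ge i j with h | h
      · exact hpdist i j h (by omega) heq
      · exact hpdist j i (by omega) (by omega) heq.symm
    · exact hmix i (j - n) hi (by omega) heq
    · exact hmix j (i - n) hj (by omega) heq.symm
    · have := θ.toEquiv.injective heq
      rcases Nat.lt_or_ge i j with h | h
      · exact hpdist (i - n) (j - n) (by omega) (by omega) this
      · exact hpdist (j - n) (i - n) (by omega) (by omega) this.symm
  · intro i hi2
    by_cases hi : i + 1 < n
    · simpa [if_pos hi, if_pos (show i < n by omega)] using hadj i (by omega)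
    · by_cases hi' : i < n
      · have hin : i + 1 = n := by omega
        have : θ (p (i + 1 - n)) = p (i + 1) := by
          rw [hin]; simp [hpn, hp0]
        simp only [if_pos hi', if_neg (show ¬ i + 1 < n by omega), this]
        exact hadj i (by omega)
      · simp only [if_neg hi', if_neg (show ¬ i + 1 < n by omega)]
        have : i + 1 - n = (i - n) + 1 := by omega
        rw [this]
        exact θ.map_adj_iff.2 (hadj (i - n) (by omega))
end

section
/- (Matte Bon–Tsankov, discrete case.) Let G be a countable discrete group and let H ⊆ Sub(G) be a nonempty closed conjugation-invariant subset. Then there exists a compact metrizable space X with an action of G by homeomorphisms such that the stabilizer map St : X → Sub(G), x ↦ G_x, is continuous everywhere on X and its image is equal to H. -/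
namespace MBTaux

variable {V : Type*}

def cycSetoid (σ : Equiv.Perm V) : Setoid V where
  r x y := ∃ i : ℤ, (σ ^ i) x = y
  iseqv := by
    refine ⟨fun x => ⟨0, by simp⟩, ?_, ?_⟩
    · rintro x y ⟨i, rfl⟩
      refine ⟨-i, ?_⟩
      simp [← Equiv.Perm.mul_apply, ← zpow_add]
    · rintro x y z ⟨i, rfl⟩ ⟨j, rfl⟩
      refine ⟨j + i, ?_⟩
      simp [← Equiv.Perm.mul_apply, ← zpow_add]

noncomputable def rep (σ : Equiv.Perm V) (v : V) : V :=
  (Quotient.mk (cycSetoid σ) v).out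

lemma rep_spec (σ : Equiv.Perm V) (v : V) : ∃ i : ℤ, (σ ^ i) (rep σ v) = v :=
  Quotient.mk_out (s := cycSetoid σ) v

lemma rep_sigma (σ : Equiv.Perm V) (v : V) : rep σ (σ v) = rep σ v := by
  unfold rep
  congr 1
  exact Quotient.sound ⟨-1, by simp⟩

noncomputable def pos (σ : Equiv.Perm V) (v : V) : ℤ :=
  (rep_spec σ v).choose

lemma pos_spec (σ : Equiv.Perm V) (v : V) : (σ ^ pos σ v) (rep σ v) = v :=
  (rep_spec σ v).choose_spec

noncomputable def per (σ : Equiv.Perm V) (v : V) : ℕ :=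
  sInf {n : ℕ | 0 < n ∧ (σ ^ n) (rep σ v) = rep σ v}

lemma per_sigma (σ : Equiv.Perm V) (v : V) : per σ (σ v) = per σ v := by
  unfold per; rw [rep_sigma]

lemma cancel_lemma (σ : Equiv.Perm V) (x : V) (a b : ℤ)
    (h : (σ ^ a) x = (σ ^ b) x) : (σ ^ (a - b)) x = x := by
  have key : (σ ^ b) ((σ ^ (a - b)) x) = (σ ^ b) x := by
    rw [← Equiv.Perm.mul_apply, ← zpow_add]
    have e : b + (a - b) = a := by ring
    rw [e, h]
  exact (σ ^ b).injective key

lemma mul_fix (σ : Equiv.Perm V) (x : V) (d : ℤ) (hd : (σ ^ d) x = x) (j : ℤ) :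
    (σ ^ (d * j)) x = x := by
  rw [zpow_mul]
  exact Equiv.Perm.zpow_apply_eq_self_of_apply_eq_self hd j

lemma per_fix (σ : Equiv.Perm V) (v : V) (h : 0 < per σ v) :
    (σ ^ (per σ v : ℤ)) (rep σ v) = rep σ v := by
  have hne : {n : ℕ | 0 < n ∧ (σ ^ n) (rep σ v) = rep σ v}.Nonempty := by
    by_contra hemp
    rw [Set.not_nonempty_iff_eq_empty] at hemp
    have : per σ v = 0 := by unfold per; rw [hemp]; exact Nat.sInf_empty
    omega
  have := Nat.sInf_mem hne
  have h2 : (σ ^ (per σ v : ℕ)) (rep σ v) = rep σ v := this.2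
  rw [zpow_natCast]
  exact h2

lemma per_dvd (σ : Equiv.Perm V) (v : V) (h : 0 < per σ v) (d : ℤ)
    (hd : (σ ^ d) (rep σ v) = rep σ v) : (per σ v : ℤ) ∣ d := by
  set M : ℤ := (per σ v : ℤ) with hM
  have hM0 : 0 < M := by rw [hM]; exact_mod_cast h
  have h1 : (σ ^ (M * (d / M))) (rep σ v) = rep σ v :=
    mul_fix σ _ M (per_fix σ v h) _
  have h2 : (σ ^ (d % M)) (rep σ v) = rep σ v := by
    have e : d % M = d - M * (d / M) := by
      have := Int.mul_ediv_add_emod d M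
      omega
    rw [e]
    exact cancel_lemma σ _ _ _ (hd.trans h1.symm)
  have hlt : d % M < M := Int.emod_lt_of_pos d hM0
  have hge : 0 ≤ d % M := Int.emod_nonneg d (by omega)
  by_contra hndvd
  have hne0 : d % M ≠ 0 := by
    intro h0
    exact hndvd (Int.dvd_of_emod_eq_zero h0)
  set n : ℕ := (d % M).toNat with hn
  have hcast : (n : ℤ) = d % M := Int.toNat_of_nonneg hge
  have hnpos : 0 < n := by omega
  have hnlt : n < per σ v := by
    have h3 : (n : ℤ) < M := by omega
    rw [hM] at h3
    exact_mod_cast h3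
  have hmem : n ∈ {n : ℕ | 0 < n ∧ (σ ^ n) (rep σ v) = rep σ v} := by
    refine ⟨hnpos, ?_⟩
    have : (σ ^ ((n : ℤ))) (rep σ v) = rep σ v := by rw [hcast]; exact h2
    rwa [zpow_natCast] at this
  have hle : per σ v ≤ n := by unfold per; exact Nat.sInf_le hmem
  omega

lemma per_zero_unique (σ : Equiv.Perm V) (v : V) (h : per σ v = 0) (d : ℤ)
    (hd : (σ ^ d) (rep σ v) = rep σ v) : d = 0 := by
  by_contra hne
  have hmem : d.natAbs ∈ {n : ℕ | 0 < n ∧ (σ ^ n) (rep σ v) = rep σ v} := by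
    constructor
    · omega
    · have hneg : (σ ^ (-d)) (rep σ v) = rep σ v := by
        have := cancel_lemma σ (rep σ v) 0 d (by simpa using hd.symm)
        simpa using this
      rcases Int.natAbs_eq d with he | he
      · have : (σ ^ ((d.natAbs : ℤ))) (rep σ v) = rep σ v := by rw [← he]; exact hd
        rwa [zpow_natCast] at this
      · have : (σ ^ ((d.natAbs : ℤ))) (rep σ v) = rep σ v := by
          have e2 : (d.natAbs : ℤ) = -d := by omega
          rw [e2]; exact hneg
        rwa [zpow_natCast] at this
  have h1 : sInf {n : ℕ | 0 < n ∧ (σ ^ n) (rep σ v) = rep σ v} ≠ 0 := by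
    intro h0
    rcases Nat.sInf_eq_zero.mp h0 with hc | hc
    · exact absurd hc.1 (by omega)
    · rw [hc] at hmem; exact hmem
  exact h1 h

def col (M a : ℤ) : Fin 3 :=
  if a + 1 = M ∧ a % 2 = 0 then 2 else if a % 2 = 0 then 0 else 1

lemma col_ne_zero (A : ℤ) : col 0 (A + 1) ≠ col 0 A := by
  unfold col
  split_ifs <;> first | decide | omega | (exfalso; omega)

lemma col_ne (M A : ℤ) (hM : 2 ≤ M) (h0 : 0 ≤ A) (h1 : A < M) :
    col M ((A + 1) % M) ≠ col M A := by
  rcases eq_or_lt_of_le (by omega : A + 1 ≤ M) with he | hlt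
  · have : (A + 1) % M = 0 := by rw [he]; exact Int.emod_self
    rw [this]
    unfold col
    split_ifs <;> first | decide | omega | (exfalso; omega)
  · have : (A + 1) % M = A + 1 := Int.emod_eq_of_lt (by omega) hlt
    rw [this]
    unfold col
    split_ifs <;> first | decide | omega | (exfalso; omega)

set_option linter.unreachableTactic false
set_option linter.unusedTactic false

/-- **Proper 3-coloring of any permutation**: there is a 3-coloring of `V` such that
`σ v` and `v` get different colors whenever `σ v ≠ v`. -/
theorem exists_perm_coloring (σ : Equiv.Perm V) :
    ∃ c : V → Fin 3, ∀ v : V, σ v ≠ v → c (σ v) ≠ c v := by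
  refine ⟨fun v => col (per σ v : ℤ) (pos σ v % (per σ v : ℤ)), fun v hv => ?_⟩
  have hrep : rep σ (σ v) = rep σ v := rep_sigma σ v
  have hper : per σ (σ v) = per σ v := per_sigma σ v
  set ρ := rep σ v with hρ
  set p := pos σ v with hp
  set p' := pos σ (σ v) with hp'
  have h1 : (σ ^ p') ρ = σ v := by
    have := pos_spec σ (σ v)
    rwa [hrep] at this
  have h2 : (σ ^ (p + 1)) ρ = σ v := by
    have e : p + 1 = 1 + p := by ring
    rw [e, zpow_add, zpow_one, Equiv.Perm.mul_apply, pos_spec]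
  have hdiff : (σ ^ (p' - (p + 1))) ρ = ρ := cancel_lemma σ ρ _ _ (h1.trans h2.symm)
  show col (per σ (σ v) : ℤ) (pos σ (σ v) % (per σ (σ v) : ℤ)) ≠
    col (per σ v : ℤ) (pos σ v % (per σ v : ℤ))
  rw [hper, ← hp, ← hp']
  rcases Nat.eq_zero_or_pos (per σ v) with hM | hM
  · -- infinite cycle
    have hp'' : p' = p + 1 := by
      have := per_zero_unique σ v hM _ hdiff
      omega
    rw [hM, hp'']
    simpa using col_ne_zero p
  · -- finite cycle, length ≥ 2
    have hM1 : per σ v ≠ 1 := by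
      intro h1'
      have hfix : σ ρ = ρ := by
        have := per_fix σ v hM
        rw [h1'] at this
        simpa using this
      have : σ v = v := by
        have e3 : (σ ^ (p + 1)) ρ = (σ ^ p) (σ ρ) := by
          rw [zpow_add_one, Equiv.Perm.mul_apply]
        rw [e3, hfix, pos_spec] at h2
        exact h2.symm
      exact hv this
    set M : ℤ := (per σ v : ℤ) with hMdef
    have hM2 : 2 ≤ M := by
      have : 2 ≤ per σ v := by omega
      rw [hMdef]; exact_mod_cast this
    have hdvd : M ∣ (p' - (p + 1)) := per_dvd σ v hM _ hdiff
    have hmodeq : (p + 1) % M = p' % M := Int.modEq_iff_dvd.mpr hdvd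
    have hBA : p' % M = (p % M + 1) % M := by
      rw [← hmodeq, Int.add_emod]
      have h1m : (1 : ℤ) % M = 1 := Int.emod_eq_of_lt (by norm_num) (by omega)
      rw [h1m]
    rw [hBA]
    exact col_ne M (p % M) hM2 (Int.emod_nonneg p (by omega)) (Int.emod_lt_of_pos p (by omega))

end MBTaux

namespace MBTaux

variable {G : Type*} [Group G]

lemma subchar_inv {ω : G → Bool} (hω : ω ∈ SubChar G) {g : G} (hg : ω g = true) :
    ω g⁻¹ = true := hω.2.1 g hg

lemma subchar_mul {ω : G → Bool} (hω : ω ∈ SubChar G) {g h : G} (hg : ω g = true)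
    (hh : ω h = true) : ω (g * h) = true := hω.2.2 g h hg hh

/-- Conjugation by an element of the subgroup fixes the characteristic function. -/
lemma subchar_conj {ω : G → Bool} (hω : ω ∈ SubChar G) {g : G} (hg : ω g = true) (h : G) :
    ω (g⁻¹ * h * g) = ω h := by
  cases hh : ω h with
  | true =>
    exact subchar_mul hω (subchar_mul hω (subchar_inv hω hg) hh) hg
  | false =>
    by_contra hne
    have h1 : ω (g⁻¹ * h * g) = true := by
      cases h2 : ω (g⁻¹ * h * g) with
      | true => rfl
      | false => exact absurd h2 hne
    have h3 : ω (g * (g⁻¹ * h * g) * g⁻¹) = true :=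
      subchar_mul hω (subchar_mul hω hg h1) (subchar_inv hω hg)
    have e : g * (g⁻¹ * h * g) * g⁻¹ = h := by group
    rw [e, hh] at h3
    exact Bool.noConfusion h3

/-- The right-coset setoid of the subgroup with characteristic function `ω`. -/
def cosetSetoid {ω : G → Bool} (hω : ω ∈ SubChar G) : Setoid G where
  r x y := ω (x * y⁻¹) = true
  iseqv := by
    refine ⟨fun x => ?_, fun {x y} h => ?_, fun {x y z} hxy hyz => ?_⟩
    · have e : x * x⁻¹ = 1 := by group
      rw [e]; exact hω.1
    · have h2 := subchar_inv hω h
      have e : (x * y⁻¹)⁻¹ = y * x⁻¹ := by group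
      rwa [e] at h2
    · have h2 := subchar_mul hω hxy hyz
      have e : x * y⁻¹ * (y * z⁻¹) = x * z⁻¹ := by group
      rwa [e] at h2

/-- Right multiplication by `t` as a permutation of the right-coset space. -/
def cosetPerm {ω : G → Bool} (hω : ω ∈ SubChar G) (t : G) :
    Equiv.Perm (Quotient (cosetSetoid hω)) where
  toFun := Quotient.map (fun x => x * t) (by
    intro x y h
    show ω (x * t * (y * t)⁻¹) = true
    have e : x * t * (y * t)⁻¹ = x * y⁻¹ := by group
    rwa [e])
  invFun := Quotient.map (fun x => x * t⁻¹) (by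
    intro x y h
    show ω (x * t⁻¹ * (y * t⁻¹)⁻¹) = true
    have e : x * t⁻¹ * (y * t⁻¹)⁻¹ = x * y⁻¹ := by group
    rwa [e])
  left_inv := by
    intro q
    induction q using Quotient.inductionOn with
    | h x =>
      show Quotient.mk _ (x * t * t⁻¹) = Quotient.mk _ x
      have e : x * t * t⁻¹ = x := by group
      rw [e]
  right_inv := by
    intro q
    induction q using Quotient.inductionOn with
    | h x =>
      show Quotient.mk _ (x * t⁻¹ * t) = Quotient.mk _ x
      have e : x * t⁻¹ * t = x := by group
      rw [e]

lemma cosetPerm_mk {ω : G → Bool} (hω : ω ∈ SubChar G) (t x : G) :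
    cosetPerm hω t (Quotient.mk (cosetSetoid hω) x) = Quotient.mk (cosetSetoid hω) (x * t) :=
  rfl

end MBTaux


theorem matte_bon_tsankov_aux {G : Type} [Group G] [Countable G]
    (H : Set (G → Bool)) (hHsub : H ⊆ SubChar G) (hHcl : IsClosed H) (hHne : H.Nonempty)
    (hHinv : ∀ g : G, ∀ ω ∈ H, conjChar g ω ∈ H) :
    ∃ (X : Type) (t : TopologicalSpace X) (φ : G → X → X),
      @CompactSpace X t ∧ @TopologicalSpace.MetrizableSpace X t ∧
      (∀ g : G, @Continuous X X t t (φ g)) ∧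
      (∀ x : X, φ 1 x = x) ∧
      (∀ g h : G, ∀ x : X, φ (g * h) x = φ g (φ h x)) ∧
      ∃ St : X → G → Bool,
        (∀ (x : X) (g : G), St x g = true ↔ φ g x = x) ∧
        @Continuous X (G → Bool) t _ St ∧
        Set.range St = H := by
  classical
  -- the ambient compact metrizable space
  set S : Set ((G → Bool) × (G → G → Fin 3)) :=
    {p | p.1 ∈ H ∧ (∀ t k x : G, p.1 k = true → p.2 t (k * x) = p.2 t x) ∧
      (∀ t x : G, p.1 (x * t * x⁻¹) = false → p.2 t (x * t) ≠ p.2 t x)} with hSdef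
  -- the action preserves S
  have hact : ∀ (g : G) (p : (G → Bool) × (G → G → Fin 3)), p ∈ S →
      ((conjChar g p.1, fun t x => p.2 t (g⁻¹ * x)) :
        (G → Bool) × (G → G → Fin 3)) ∈ S := by
    rintro g ⟨ω, c⟩ ⟨h1, h2, h3⟩
    refine ⟨hHinv g ω h1, ?_, ?_⟩
    · intro t k x hk
      have hk' : ω (g⁻¹ * k * g) = true := hk
      have := h2 t (g⁻¹ * k * g) (g⁻¹ * x) hk'
      have e1 : g⁻¹ * k * g * (g⁻¹ * x) = g⁻¹ * (k * x) := by group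
      rwa [e1] at this
    · intro t x hx
      have hx' : ω ((g⁻¹ * x) * t * (g⁻¹ * x)⁻¹) = false := by
        have e2 : g⁻¹ * (x * t * x⁻¹) * g = (g⁻¹ * x) * t * (g⁻¹ * x)⁻¹ := by group
        have : conjChar g ω (x * t * x⁻¹) = false := hx
        rwa [conjChar, e2] at this
      have := h3 t (g⁻¹ * x) hx'
      have e3 : g⁻¹ * x * t = g⁻¹ * (x * t) := by group
      rwa [e3] at this
  -- the space and the action
  refine ⟨S, inferInstance, fun g p => ⟨(conjChar g p.1.1, fun t x => p.1.2 t (g⁻¹ * x)),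
    hact g p.1 p.2⟩, ?_, ?_, ?_, ?_, ?_, ?_⟩
  · -- compactness
    have hScl : IsClosed S := by
      have hc1 : IsClosed {p : (G → Bool) × (G → G → Fin 3) | p.1 ∈ H} :=
        hHcl.preimage continuous_fst
      have hc2 : IsClosed {p : (G → Bool) × (G → G → Fin 3) |
          ∀ t k x : G, p.1 k = true → p.2 t (k * x) = p.2 t x} := by
        rw [Set.setOf_forall]
        refine isClosed_iInter fun t => ?_
        rw [Set.setOf_forall]
        refine isClosed_iInter fun k => ?_
        rw [Set.setOf_forall]
        refine isClosed_iInter fun x => ?_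
        have he : {p : (G → Bool) × (G → G → Fin 3) | p.1 k = true → p.2 t (k * x) = p.2 t x}
            = {p : (G → Bool) × (G → G → Fin 3) | p.1 k = true}ᶜ ∪
              {p : (G → Bool) × (G → G → Fin 3) | p.2 t (k * x) = p.2 t x} := by
          ext p; by_cases h : p.1 k = true <;> simp [h]
        rw [he]
        refine IsClosed.union ?_ ?_
        · rw [isClosed_compl_iff]
          have he1 : {p : (G → Bool) × (G → G → Fin 3) | p.1 k = true}
              = (fun p : (G → Bool) × (G → G → Fin 3) => p.1 k) ⁻¹' {b : Bool | b = true} := rfl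
          rw [he1]
          exact (isOpen_discrete _).preimage ((continuous_apply k).comp continuous_fst)
        · exact isClosed_eq
            ((continuous_apply (k * x)).comp ((continuous_apply t).comp continuous_snd))
            ((continuous_apply x).comp ((continuous_apply t).comp continuous_snd))
      have hc3 : IsClosed {p : (G → Bool) × (G → G → Fin 3) |
          ∀ t x : G, p.1 (x * t * x⁻¹) = false → p.2 t (x * t) ≠ p.2 t x} := by
        rw [Set.setOf_forall]
        refine isClosed_iInter fun t => ?_
        rw [Set.setOf_forall]
        refine isClosed_iInter fun x => ?_
        have he : {p : (G → Bool) × (G → G → Fin 3) |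
              p.1 (x * t * x⁻¹) = false → p.2 t (x * t) ≠ p.2 t x}
            = {p : (G → Bool) × (G → G → Fin 3) | p.1 (x * t * x⁻¹) = false}ᶜ ∪
              {p : (G → Bool) × (G → G → Fin 3) | p.2 t (x * t) ≠ p.2 t x} := by
          ext p; by_cases h : p.1 (x * t * x⁻¹) = false <;> simp [h]
        rw [he]
        refine IsClosed.union ?_ ?_
        · rw [isClosed_compl_iff]
          have he1 : {p : (G → Bool) × (G → G → Fin 3) | p.1 (x * t * x⁻¹) = false}
              = (fun p : (G → Bool) × (G → G → Fin 3) => p.1 (x * t * x⁻¹)) ⁻¹'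
                {b : Bool | b = false} := rfl
          rw [he1]
          exact (isOpen_discrete _).preimage
            ((continuous_apply (x * t * x⁻¹)).comp continuous_fst)
        · have he2 : {p : (G → Bool) × (G → G → Fin 3) | p.2 t (x * t) ≠ p.2 t x}
              = (fun p : (G → Bool) × (G → G → Fin 3) => (p.2 t (x * t), p.2 t x)) ⁻¹'
                {q : Fin 3 × Fin 3 | q.1 ≠ q.2} := rfl
          rw [he2]
          exact (isClosed_discrete _).preimage
            (((continuous_apply (x * t)).comp ((continuous_apply t).comp continuous_snd)).prodMk
              ((continuous_apply x).comp ((continuous_apply t).comp continuous_snd)))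
      have : S = {p : (G → Bool) × (G → G → Fin 3) | p.1 ∈ H} ∩
          ({p : (G → Bool) × (G → G → Fin 3) |
            ∀ t k x : G, p.1 k = true → p.2 t (k * x) = p.2 t x} ∩
           {p : (G → Bool) × (G → G → Fin 3) |
            ∀ t x : G, p.1 (x * t * x⁻¹) = false → p.2 t (x * t) ≠ p.2 t x}) := rfl
      rw [this]
      exact hc1.inter (hc2.inter hc3)
    exact isCompact_iff_compactSpace.mp hScl.isCompact
  · -- metrizability
    infer_instance
  · -- continuity of the action
    intro g
    refine Continuous.subtype_mk ?_ _
    refine Continuous.prodMk ?_ ?_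
    · exact continuous_pi fun h =>
        (continuous_apply (g⁻¹ * h * g)).comp (continuous_fst.comp continuous_subtype_val)
    · exact continuous_pi fun t => continuous_pi fun x =>
        (continuous_apply (g⁻¹ * x)).comp
          ((continuous_apply t).comp (continuous_snd.comp continuous_subtype_val))
  · -- identity
    intro p
    refine Subtype.ext (Prod.ext ?_ ?_)
    · funext h
      show p.1.1 (1⁻¹ * h * 1) = p.1.1 h
      rw [inv_one, one_mul, mul_one]
    · funext t x
      show p.1.2 t ((1 : G)⁻¹ * x) = p.1.2 t x
      rw [inv_one, one_mul]
  · -- composition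
    intro g h p
    refine Subtype.ext (Prod.ext ?_ ?_)
    · funext k
      show p.1.1 ((g * h)⁻¹ * k * (g * h)) = p.1.1 (h⁻¹ * (g⁻¹ * k * g) * h)
      have e : (g * h)⁻¹ * k * (g * h) = h⁻¹ * (g⁻¹ * k * g) * h := by group
      rw [e]
    · funext t x
      show p.1.2 t ((g * h)⁻¹ * x) = p.1.2 t (h⁻¹ * (g⁻¹ * x))
      have e : (g * h)⁻¹ * x = h⁻¹ * (g⁻¹ * x) := by group
      rw [e]
  · -- the stabilizer map
    refine ⟨fun p => p.1.1, ?_, ?_, ?_⟩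
    · -- stabilizer characterization
      intro p g
      obtain ⟨⟨ω, c⟩, h1, h2, h3⟩ := p
      constructor
      · intro hg
        have hsub : ω ∈ SubChar G := hHsub h1
        refine Subtype.ext (Prod.ext ?_ ?_)
        · funext h
          exact MBTaux.subchar_conj hsub hg h
        · funext t x
          have hk : ω g⁻¹ = true := MBTaux.subchar_inv hsub hg
          exact h2 t g⁻¹ x hk
      · intro hfix
        have hc := congrArg (fun q => (Subtype.val q).2 g g) hfix
        have hc2 : c g (g⁻¹ * g) = c g g := hc
        rw [inv_mul_cancel] at hc2
        by_contra hg
        have hgf : ω g = false := by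
          cases hb : ω g with
          | true => exact absurd hb hg
          | false => rfl
        have hx : ω (1 * g * 1⁻¹) = false := by
          have e : (1 : G) * g * 1⁻¹ = g := by group
          rw [e]; exact hgf
        have := h3 g 1 hx
        rw [one_mul] at this
        exact this hc2.symm
    · -- continuity of St
      exact continuous_pi fun g =>
        (continuous_apply g).comp (continuous_fst.comp continuous_subtype_val)
    · -- range of St
      apply Set.eq_of_subset_of_subset
      · rintro ω ⟨p, rfl⟩
        exact p.2.1
      · intro ω hω
        have hsub : ω ∈ SubChar G := hHsub hω
        have hex := fun t : G => MBTaux.exists_perm_coloring (MBTaux.cosetPerm hsub t)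
        choose cc hcc using hex
        refine ⟨⟨(ω, fun t x => cc t (Quotient.mk (MBTaux.cosetSetoid hsub) x)),
          hω, ?_, ?_⟩, rfl⟩
        · intro t k x hk
          have hrel : (MBTaux.cosetSetoid hsub).r (k * x) x := by
            show ω (k * x * x⁻¹) = true
            have e : k * x * x⁻¹ = k := by group
            rwa [e]
          show cc t (Quotient.mk (MBTaux.cosetSetoid hsub) (k * x))
            = cc t (Quotient.mk (MBTaux.cosetSetoid hsub) x)
          exact congrArg (cc t) (Quotient.sound hrel)
        · intro t x hx
          have hne : MBTaux.cosetPerm hsub t (Quotient.mk (MBTaux.cosetSetoid hsub) x)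
              ≠ Quotient.mk (MBTaux.cosetSetoid hsub) x := by
            rw [MBTaux.cosetPerm_mk]
            intro heq
            have := Quotient.exact heq
            have h4 : ω (x * t * x⁻¹) = true := this
            have h5 : ω (x * t * x⁻¹) = false := hx
            rw [h4] at h5
            exact Bool.noConfusion h5
          have := hcc t (Quotient.mk (MBTaux.cosetSetoid hsub) x) hne
          rwa [MBTaux.cosetPerm_mk] at this

/-- **Matte Bon–Tsankov, discrete case.** Let `G` be a countable discrete group and let
`H ⊆ Sub(G)` be a nonempty closed conjugation-invariant subset.  Then there is a compact
metrizable space `X` with an action `φ` of `G` by homeomorphisms whose stabilizer map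
`St : X → Sub(G)` is continuous everywhere and has image exactly `H`. -/
theorem matte_bon_tsankov_discrete {G : Type*} [Group G] [Countable G]
    (H : Set (G → Bool)) (hHsub : H ⊆ SubChar G) (hHcl : IsClosed H) (hHne : H.Nonempty)
    (hHinv : ∀ g : G, ∀ ω ∈ H, conjChar g ω ∈ H) :
    ∃ (X : Type) (t : TopologicalSpace X) (φ : G → X → X),
      @CompactSpace X t ∧ @TopologicalSpace.MetrizableSpace X t ∧
      (∀ g : G, @Continuous X X t t (φ g)) ∧
      (∀ x : X, φ 1 x = x) ∧
      (∀ g h : G, ∀ x : X, φ (g * h) x = φ g (φ h x)) ∧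
      ∃ St : X → G → Bool,
        (∀ (x : X) (g : G), St x g = true ↔ φ g x = x) ∧
        @Continuous X (G → Bool) t _ St ∧
        Set.range St = H := by
  classical
  letI : Countable (Shrink.{0} G) := Countable.of_equiv G (equivShrink.{0} G)
  set μ : Shrink.{0} G ≃* G := Shrink.mulEquiv with hμ
  set Ψ : (Shrink.{0} G → Bool) → (G → Bool) := fun ωd g => ωd (μ.symm g) with hΨ
  have hΨcont : Continuous Ψ := continuous_pi fun g => continuous_apply (μ.symm g)
  have hΨsurj : Function.Surjective Ψ := by
    intro ω
    refine ⟨fun d => ω (μ d), funext fun g => ?_⟩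
    show ω (μ (μ.symm g)) = ω g
    rw [MulEquiv.apply_symm_apply]
  set HD : Set (Shrink.{0} G → Bool) := Ψ ⁻¹' H with hHD
  have hDsub : HD ⊆ SubChar (Shrink.{0} G) := by
    intro ωd hd
    obtain ⟨u1, u2, u3⟩ := hHsub hd
    refine ⟨?_, ?_, ?_⟩
    · have h1 : ωd (μ.symm 1) = true := u1
      rwa [map_one] at h1
    · intro d hdm
      have h2 : Ψ ωd (μ d) = true := by
        show ωd (μ.symm (μ d)) = true
        rwa [MulEquiv.symm_apply_apply]
      have h3 : Ψ ωd (μ d)⁻¹ = true := u2 (μ d) h2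
      have h4 : ωd (μ.symm (μ d)⁻¹) = true := h3
      rwa [map_inv, MulEquiv.symm_apply_apply] at h4
    · intro d e hdm hem
      have h2 : Ψ ωd (μ d) = true := by
        show ωd (μ.symm (μ d)) = true
        rwa [MulEquiv.symm_apply_apply]
      have h2' : Ψ ωd (μ e) = true := by
        show ωd (μ.symm (μ e)) = true
        rwa [MulEquiv.symm_apply_apply]
      have h3 : Ψ ωd (μ d * μ e) = true := u3 (μ d) (μ e) h2 h2'
      have h4 : ωd (μ.symm (μ d * μ e)) = true := h3
      rwa [map_mul, MulEquiv.symm_apply_apply, MulEquiv.symm_apply_apply] at h4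
  have hDcl : IsClosed HD := hHcl.preimage hΨcont
  have hDne : HD.Nonempty := by
    obtain ⟨ω, hω⟩ := hHne
    refine ⟨fun d => ω (μ d), ?_⟩
    show Ψ (fun d => ω (μ d)) ∈ H
    have : Ψ (fun d => ω (μ d)) = ω := funext fun g => by
      show ω (μ (μ.symm g)) = ω g
      rw [MulEquiv.apply_symm_apply]
    rwa [this]
  have hDinv : ∀ d : Shrink.{0} G, ∀ ωd ∈ HD, conjChar d ωd ∈ HD := by
    intro d ωd hd
    show Ψ (conjChar d ωd) ∈ H
    have he : Ψ (conjChar d ωd) = conjChar (μ d) (Ψ ωd) := by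
      funext g
      show ωd (d⁻¹ * μ.symm g * d) = ωd (μ.symm ((μ d)⁻¹ * g * μ d))
      rw [map_mul, map_mul, map_inv, MulEquiv.symm_apply_apply]
    rw [he]
    exact hHinv (μ d) (Ψ ωd) hd
  obtain ⟨X, tX, φD, hcomp, hmetr, hcont, hone, hmul, StD, hstab, hstcont, hrange⟩ :=
    matte_bon_tsankov_aux HD hDsub hDcl hDne hDinv
  refine ⟨X, tX, fun g => φD (μ.symm g), hcomp, hmetr, fun g => hcont _, ?_, ?_,
    fun x g => StD x (μ.symm g), ?_, ?_, ?_⟩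
  · intro x
    show φD (μ.symm 1) x = x
    rw [map_one]
    exact hone x
  · intro g h x
    show φD (μ.symm (g * h)) x = φD (μ.symm g) (φD (μ.symm h) x)
    rw [map_mul]
    exact hmul _ _ x
  · intro x g
    exact hstab x (μ.symm g)
  · exact continuous_pi fun g => (continuous_apply (μ.symm g)).comp hstcont
  · have hcomp2 : (fun x : X => fun g => StD x (μ.symm g)) = Ψ ∘ StD := rfl
    rw [hcomp2, Set.range_comp, hrange]
    exact Set.image_preimage_eq H hΨsurj
end

section
/- (Pestov's characterization.) Let G be an infinite countable group. The following are equivalent: (1) there exists a subshift X ⊆ {0,1}^G on which G acts freely; (2) there exists a 2-coloring c : G → {0,1} such that for every g ≠ e there is a finite set A = A(g) ⊆ G such that for every h ∈ G there is an a ∈ A ∩ g⁻¹A with c(ha) ≠ c(hga). -/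
/-- The (left) shift action of `G` on `{0,1}^G = G → Bool`: `(g·ω)(h) = ω(g⁻¹h)`. -/
def shiftB {G : Type*} [Group G] (g : G) (ω : G → Bool) : G → Bool :=
  fun h => ω (g⁻¹ * h)

lemma isClosed_ne_coords {G : Type*} (a b : G) :
    IsClosed {y : G → Bool | y a ≠ y b} := by
  have : {y : G → Bool | y a ≠ y b}
      = (fun y : G → Bool => (y a, y b)) ⁻¹' {p : Bool × Bool | p.1 ≠ p.2} := rfl
  rw [this]
  exact (isClosed_discrete _).preimage ((continuous_apply a).prodMk (continuous_apply b))

lemma isOpen_ne_coords {G : Type*} (a b : G) :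
    IsOpen {y : G → Bool | y a ≠ y b} := by
  have : {y : G → Bool | y a ≠ y b}
      = (fun y : G → Bool => (y a, y b)) ⁻¹' {p : Bool × Bool | p.1 ≠ p.2} := rfl
  rw [this]
  exact (isOpen_discrete _).preimage ((continuous_apply a).prodMk (continuous_apply b))

/-- **Pestov's characterization.** For an infinite countable group `G`, the following are
equivalent: (1) there is a subshift `X ⊆ {0,1}^G` (a nonempty closed shift-invariant set)
on which `G` acts freely; (2) there is a 2-coloring `c : G → {0,1}` such that for every
`g ≠ e` there is a finite set `A ⊆ G` such that for every `h ∈ G` there is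
`a ∈ A ∩ g⁻¹A` with `c (h a) ≠ c (h g a)`. -/
theorem pestov_characterization {G : Type*} [Group G] [Countable G] [Infinite G] :
    (∃ X : Set (G → Bool), X.Nonempty ∧ IsClosed X ∧
      (∀ g : G, ∀ x ∈ X, shiftB g x ∈ X) ∧
      (∀ x ∈ X, ∀ g : G, g ≠ 1 → shiftB g x ≠ x)) ↔
    (∃ c : G → Bool, ∀ g : G, g ≠ 1 → ∃ A : Finset G, ∀ h : G,
      ∃ a ∈ A, g * a ∈ A ∧ c (h * a) ≠ c (h * g * a)) := by
  classical
  constructor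
  · rintro ⟨X, ⟨x₀, hx₀⟩, hXc, hXinv, hfree⟩
    refine ⟨x₀, fun g hg => ?_⟩
    have hcomp : IsCompact X := hXc.isCompact
    have hcover : X ⊆ ⋃ t : G, {y : G → Bool | y (g⁻¹ * t) ≠ y t} := by
      intro y hy
      have h1 := hfree y hy g hg
      have h2 : ∃ t, shiftB g y t ≠ y t := by
        by_contra h; push_neg at h; exact h1 (funext h)
      obtain ⟨t, ht⟩ := h2
      exact Set.mem_iUnion.2 ⟨t, ht⟩
    obtain ⟨T, hT⟩ := hcomp.elim_finite_subcover _
      (fun t => isOpen_ne_coords (g⁻¹ * t) t) hcover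
    refine ⟨T ∪ T.image (fun t => g⁻¹ * t), fun h => ?_⟩
    have hx : shiftB h⁻¹ x₀ ∈ X := hXinv _ _ hx₀
    obtain ⟨t, htT, ht⟩ := Set.mem_iUnion₂.1 (hT hx)
    refine ⟨g⁻¹ * t, ?_, ?_, ?_⟩
    · exact Finset.mem_union_right _ (Finset.mem_image.2 ⟨t, htT, rfl⟩)
    · have e : g * (g⁻¹ * t) = t := by group
      rw [e]
      exact Finset.mem_union_left _ htT
    · have ht' : x₀ (h * (g⁻¹ * t)) ≠ x₀ (h * t) := by
        simpa [shiftB] using ht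
      have e1 : h * (g⁻¹ * t) = h * (g⁻¹ * t) := rfl
      have e2 : h * g * (g⁻¹ * t) = h * t := by group
      rw [e2]
      exact ht'
  · rintro ⟨c, hc⟩
    refine ⟨closure {x | ∃ k : G, shiftB k c = x},
      ⟨c, subset_closure ⟨1, by funext h; simp [shiftB]⟩⟩, isClosed_closure, ?_, ?_⟩
    · intro g x hx
      have hcont : Continuous (shiftB g) :=
        continuous_pi fun h => continuous_apply _
      have h1 : shiftB g x ∈ closure (shiftB g '' {x | ∃ k, shiftB k c = x}) :=
        image_closure_subset_closure_image hcont ⟨x, hx, rfl⟩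
      refine closure_mono ?_ h1
      rintro _ ⟨y, ⟨k, rfl⟩, rfl⟩
      refine ⟨g * k, ?_⟩
      funext h
      simp [shiftB, mul_assoc]
    · intro x hx g hg hgx
      obtain ⟨A, hA⟩ := hc g hg
      have hclosed : IsClosed {y : G → Bool | ∃ a ∈ A, g * a ∈ A ∧ y a ≠ y (g * a)} := by
        have heq : {y : G → Bool | ∃ a ∈ A, g * a ∈ A ∧ y a ≠ y (g * a)}
            = ⋃ a ∈ (A : Set G), {y : G → Bool | g * a ∈ A ∧ y a ≠ y (g * a)} := by
          ext y; simp; tauto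
        rw [heq]
        refine Set.Finite.isClosed_biUnion A.finite_toSet fun a _ => ?_
        by_cases hga : g * a ∈ A
        · have : {y : G → Bool | g * a ∈ A ∧ y a ≠ y (g * a)}
              = {y : G → Bool | y a ≠ y (g * a)} := by ext y; simp [hga]
          rw [this]; exact isClosed_ne_coords a (g * a)
        · have : {y : G → Bool | g * a ∈ A ∧ y a ≠ y (g * a)} = ∅ := by
            ext y; simp [hga]
          rw [this]; exact isClosed_empty
      have horb : {x | ∃ k : G, shiftB k c = x}
          ⊆ {y : G → Bool | ∃ a ∈ A, g * a ∈ A ∧ y a ≠ y (g * a)} := by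
        rintro _ ⟨k, rfl⟩
        obtain ⟨a, haA, hga, hne⟩ := hA k⁻¹
        refine ⟨a, haA, hga, ?_⟩
        simpa [shiftB, mul_assoc] using hne
      have hP := closure_minimal horb hclosed hx
      obtain ⟨a, _, _, hne⟩ := hP
      apply hne
      have := congrFun hgx (g * a)
      simpa [shiftB, inv_mul_cancel_left] using this
end

section
/- (Gao–Jackson–Seward.) Every countably infinite group G has the 2-coloring property: there exists c : G → {0,1} such that for every g ≠ e there is a finite set A ⊆ G such that for every h ∈ G there is an a ∈ A ∩ g⁻¹A with c(ha) ≠ c(hga). -/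
open Finset

namespace GJS

set_option linter.unusedSectionVars false
set_option maxHeartbeats 1000000


set_option linter.unusedSectionVars false

variable {V : Type*} [Fintype V] [DecidableEq V]
variable {ι : Type*} [DecidableEq ι]

def avoid (E : ι → Finset (V → Bool)) (J : Finset ι) : Finset (V → Bool) :=
  Finset.univ.filter (fun c => ∀ j ∈ J, c ∉ E j)

lemma mem_avoid {E : ι → Finset (V → Bool)} {J : Finset ι} {c : V → Bool} :
    c ∈ avoid E J ↔ ∀ j ∈ J, c ∉ E j := by simp [avoid]

lemma avoid_insert (E : ι → Finset (V → Bool)) (J : Finset ι) (j : ι) :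
    avoid E (insert j J) = avoid E J \ E j := by
  ext c
  simp only [mem_avoid, Finset.mem_sdiff, Finset.mem_insert]
  constructor
  · intro h; exact ⟨fun k hk => h k (Or.inr hk), h j (Or.inl rfl)⟩
  · rintro ⟨h1, h2⟩ k (rfl | hk)
    · exact h2
    · exact h1 k hk

lemma avoid_mono (E : ι → Finset (V → Bool)) {J J' : Finset ι} (h : J ⊆ J') :
    avoid E J' ⊆ avoid E J := by
  intro c hc
  rw [mem_avoid] at hc ⊢
  exact fun j hj => hc j (h hj)

lemma card_avoid_insert (E : ι → Finset (V → Bool)) (J : Finset ι) (j : ι) :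
    ((avoid E (insert j J)).card : ℝ)
      = (avoid E J).card - ((E j ∩ avoid E J).card : ℝ) := by
  have h := Finset.card_inter_add_card_sdiff (avoid E J) (E j)
  rw [avoid_insert]
  have : (E j ∩ avoid E J) = (avoid E J ∩ E j) := Finset.inter_comm _ _
  rw [this]
  push_cast [← h]
  ring

/-- the merge of two colorings along `U`. -/
def merge (U : Finset V) (c d : V → Bool) : V → Bool :=
  fun v => if v ∈ U then c v else d v

/-- Independence of cylinder events, counting form. -/
lemma cylinder_indep (U : Finset V) (A B : Finset (V → Bool))
    (hA : ∀ c c' : V → Bool, (∀ v ∈ U, c v = c' v) → (c ∈ A ↔ c' ∈ A))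
    (hB : ∀ c c' : V → Bool, (∀ v, v ∉ U → c v = c' v) → (c ∈ B ↔ c' ∈ B)) :
    A.card * B.card = (A ∩ B).card * Fintype.card (V → Bool) := by
  have key : (A ×ˢ B).card = ((A ∩ B) ×ˢ (Finset.univ : Finset (V → Bool))).card := by
    apply Finset.card_bij' (fun p _ => (merge U p.1 p.2, merge U p.2 p.1))
      (fun p _ => (merge U p.1 p.2, merge U p.2 p.1))
    · rintro ⟨c, d⟩ hp
      rw [Finset.mem_product] at hp
      rw [Finset.mem_product, Finset.mem_inter]
      refine ⟨⟨?_, ?_⟩, Finset.mem_univ _⟩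
      · exact (hA (merge U c d) c (fun v hv => by simp [merge, hv])).mpr hp.1
      · exact (hB (merge U c d) d (fun v hv => by simp [merge, hv])).mpr hp.2
    · rintro ⟨c, d⟩ hp
      rw [Finset.mem_product, Finset.mem_inter] at hp
      rw [Finset.mem_product]
      constructor
      · exact (hA (merge U c d) c (fun v hv => by simp [merge, hv])).mpr hp.1.1
      · exact (hB (merge U d c) c (fun v hv => by simp [merge, hv])).mpr hp.1.2
    · rintro ⟨c, d⟩ _
      simp only [Prod.mk.injEq]
      constructor <;> (funext v; by_cases hv : v ∈ U <;> simp [merge, hv])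
    · rintro ⟨c, d⟩ _
      simp only [Prod.mk.injEq]
      constructor <;> (funext v; by_cases hv : v ∈ U <;> simp [merge, hv])
  simpa [Finset.card_product] using key


section LLLmain

variable (I : Finset ι) (E : ι → Finset (V → Bool)) (vbl : ι → Finset V) (x : ι → ℝ)

/-- The key conditional-probability claim of the local lemma, counting form. -/
lemma lll_claim
    (hx0 : ∀ i ∈ I, 0 < x i) (hx1 : ∀ i ∈ I, x i < 1)
    (hdet : ∀ i ∈ I, ∀ c c' : V → Bool, (∀ v ∈ vbl i, c v = c' v) → (c ∈ E i ↔ c' ∈ E i))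
    (hp : ∀ i ∈ I, ((E i).card : ℝ) ≤
      x i * (∏ j ∈ I.filter (fun j => ¬ Disjoint (vbl i) (vbl j)), (1 - x j)) *
        (Fintype.card (V → Bool))) :
    ∀ n : ℕ, ∀ J ⊆ I, J.card = n → ∀ i ∈ I, i ∉ J →
      ((E i ∩ avoid E J).card : ℝ) ≤ x i * (avoid E J).card := by
  intro n
  induction n using Nat.strong_induction_on with
  | _ n IH =>
  intro J hJI hJcard i hiI hiJ
  set D : Finset ι := I.filter (fun j => ¬ Disjoint (vbl i) (vbl j)) with hD
  set J₁ : Finset ι := J.filter (fun j => ¬ Disjoint (vbl i) (vbl j)) with hJ₁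
  set J₂ : Finset ι := J.filter (fun j => Disjoint (vbl i) (vbl j)) with hJ₂
  have hJsplit : J₁ ∪ J₂ = J := by
    rw [hJ₁, hJ₂, Finset.union_comm]
    exact Finset.filter_union_filter_not_eq _ J
  have hJ₂I : J₂ ⊆ I := (Finset.filter_subset _ _).trans hJI
  have hJ₁I : J₁ ⊆ I := (Finset.filter_subset _ _).trans hJI
  have hΩpos : (0:ℝ) < Fintype.card (V → Bool) := by
    exact_mod_cast Fintype.card_pos
  -- Step A : independence
  have hindep : ((E i ∩ avoid E J₂).card : ℝ) * Fintype.card (V → Bool)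
      = (E i).card * (avoid E J₂).card := by
    have hB : ∀ c c' : V → Bool, (∀ v, v ∉ vbl i → c v = c' v) →
        (c ∈ avoid E J₂ ↔ c' ∈ avoid E J₂) := by
      intro c c' hcc
      simp only [mem_avoid]
      have hagree : ∀ j ∈ J₂, ∀ v ∈ vbl j, c v = c' v := by
        intro j hj v hv
        have hjd := (Finset.mem_filter.mp hj).2
        exact hcc v (fun hvi => (Finset.disjoint_left.mp hjd) hvi hv)
      constructor
      · intro h j hj hc'
        exact h j hj ((hdet j (hJ₂I hj) c c' (hagree j hj)).mpr hc')
      · intro h j hj hc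
        exact h j hj ((hdet j (hJ₂I hj) c c' (hagree j hj)).mp hc)
    have := cylinder_indep (vbl i) (E i) (avoid E J₂) (hdet i hiI) hB
    exact_mod_cast this.symm
  -- Step B : chain lower bound
  have hchain : ∀ T ⊆ J₁,
      (∏ j ∈ T, (1 - x j)) * ((avoid E J₂).card : ℝ) ≤ (avoid E (J₂ ∪ T)).card := by
    intro T
    induction T using Finset.induction_on with
    | empty => intro _; simp
    | @insert a T haT IHT =>
      intro hsub
      have haJ₁ : a ∈ J₁ := hsub (Finset.mem_insert_self a T)
      have hTJ₁ : T ⊆ J₁ := fun t ht => hsub (Finset.mem_insert_of_mem ht)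
      have haJ : a ∈ J := (Finset.filter_subset _ _) haJ₁
      have haI : a ∈ I := hJI haJ
      have hsubJ : J₂ ∪ T ⊆ J := by
        rw [← hJsplit]
        exact Finset.union_subset (Finset.subset_union_right)
          (hTJ₁.trans Finset.subset_union_left)
      have haJT : a ∉ J₂ ∪ T := by
        rw [Finset.mem_union]
        rintro (h2 | hT)
        · have := (Finset.mem_filter.mp h2).2
          exact (Finset.mem_filter.mp haJ₁).2 this
        · exact haT hT
      have hlt : (J₂ ∪ T).card < n := by
        rw [← hJcard]
        apply Finset.card_lt_card
        rw [Finset.ssubset_iff_of_subset hsubJ]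
        exact ⟨a, haJ, haJT⟩
      have hstep := IH _ hlt (J₂ ∪ T) (hsubJ.trans hJI) rfl a haI haJT
      have hins : J₂ ∪ insert a T = insert a (J₂ ∪ T) := Finset.union_insert a J₂ T
      rw [hins, card_avoid_insert]
      have hx0a := hx0 a haI
      have hprodnn : (0:ℝ) ≤ ∏ j ∈ T, (1 - x j) := by
        apply Finset.prod_nonneg
        intro j hj
        have := hx1 j (hJ₁I (hTJ₁ hj))
        linarith
      have h1 : (∏ j ∈ insert a T, (1 - x j)) * ((avoid E J₂).card : ℝ)
          = (1 - x a) * ((∏ j ∈ T, (1 - x j)) * ((avoid E J₂).card : ℝ)) := by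
        rw [Finset.prod_insert haT]; ring
      rw [h1]
      have h2 : (1 - x a) * ((∏ j ∈ T, (1 - x j)) * ((avoid E J₂).card : ℝ))
          ≤ (1 - x a) * ((avoid E (J₂ ∪ T)).card : ℝ) := by
        apply mul_le_mul_of_nonneg_left (IHT hTJ₁)
        have := hx1 a haI; linarith
      refine h2.trans ?_
      nlinarith [hstep, hx0 a haI]
  -- Step C : combine
  have hAJ2 : avoid E J ⊆ avoid E J₂ := avoid_mono E (by rw [← hJsplit]; exact Finset.subset_union_right)
  have hsubset1 : ((E i ∩ avoid E J).card : ℝ) ≤ ((E i ∩ avoid E J₂).card : ℝ) := by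
    exact_mod_cast Finset.card_le_card (Finset.inter_subset_inter (le_refl (E i)) hAJ2)
  have hprodD_le : (∏ j ∈ D, (1 - x j)) ≤ (∏ j ∈ J₁, (1 - x j)) := by
    have hJ₁D : J₁ ⊆ D := by
      intro j hj
      rw [hJ₁, Finset.mem_filter] at hj
      rw [hD, Finset.mem_filter]
      exact ⟨hJI hj.1, hj.2⟩
    have : D = J₁ ∪ (D \ J₁) := by rw [Finset.union_sdiff_of_subset hJ₁D]
    rw [this, Finset.prod_union (Finset.disjoint_sdiff)]
    have h1 : (∏ j ∈ D \ J₁, (1 - x j)) ≤ 1 := by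
      apply Finset.prod_le_one
      · intro j hj
        have hjI : j ∈ I := (Finset.filter_subset _ _) (Finset.mem_sdiff.mp hj).1
        have := hx1 j hjI; linarith
      · intro j hj
        have hjI : j ∈ I := (Finset.filter_subset _ _) (Finset.mem_sdiff.mp hj).1
        have := hx0 j hjI; linarith
    have h2 : (0:ℝ) ≤ ∏ j ∈ J₁, (1 - x j) := by
      apply Finset.prod_nonneg
      intro j hj
      have := hx1 j (hJ₁I hj); linarith
    nlinarith
  have hchainJ : (∏ j ∈ J₁, (1 - x j)) * ((avoid E J₂).card : ℝ) ≤ (avoid E J).card := by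
    have h := hchain J₁ (le_refl J₁)
    have he : J₂ ∪ J₁ = J := by rw [Finset.union_comm]; exact hJsplit
    rwa [he] at h
  -- now multiply out
  have hxi0 := hx0 i hiI
  have goal' : ((E i ∩ avoid E J).card : ℝ) * Fintype.card (V → Bool)
      ≤ x i * ((avoid E J).card : ℝ) * Fintype.card (V → Bool) := by
    calc ((E i ∩ avoid E J).card : ℝ) * Fintype.card (V → Bool)
        ≤ ((E i ∩ avoid E J₂).card : ℝ) * Fintype.card (V → Bool) := by
          apply mul_le_mul_of_nonneg_right hsubset1 (le_of_lt hΩpos)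
      _ = (E i).card * ((avoid E J₂).card : ℝ) := hindep
      _ ≤ (x i * (∏ j ∈ D, (1 - x j)) * (Fintype.card (V → Bool))) * ((avoid E J₂).card : ℝ) := by
          apply mul_le_mul_of_nonneg_right (hp i hiI) (by positivity)
      _ ≤ (x i * (∏ j ∈ J₁, (1 - x j)) * (Fintype.card (V → Bool))) * ((avoid E J₂).card : ℝ) := by
          apply mul_le_mul_of_nonneg_right _ (by positivity)
          apply mul_le_mul_of_nonneg_right _ (le_of_lt hΩpos)
          exact mul_le_mul_of_nonneg_left hprodD_le (le_of_lt hxi0)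
      _ = x i * ((∏ j ∈ J₁, (1 - x j)) * ((avoid E J₂).card : ℝ)) * Fintype.card (V → Bool) := by ring
      _ ≤ x i * ((avoid E J).card : ℝ) * Fintype.card (V → Bool) := by
          apply mul_le_mul_of_nonneg_right _ (le_of_lt hΩpos)
          exact mul_le_mul_of_nonneg_left hchainJ (le_of_lt hxi0)
  exact le_of_mul_le_mul_right goal' hΩpos

/-- Lovász local lemma, counting form. -/
theorem lll
    (hx0 : ∀ i ∈ I, 0 < x i) (hx1 : ∀ i ∈ I, x i < 1)
    (hdet : ∀ i ∈ I, ∀ c c' : V → Bool, (∀ v ∈ vbl i, c v = c' v) → (c ∈ E i ↔ c' ∈ E i))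
    (hp : ∀ i ∈ I, ((E i).card : ℝ) ≤
      x i * (∏ j ∈ I.filter (fun j => ¬ Disjoint (vbl i) (vbl j)), (1 - x j)) *
        (Fintype.card (V → Bool))) :
    ∃ c : V → Bool, ∀ i ∈ I, c ∉ E i := by
  have key : ∀ J ⊆ I, (∏ j ∈ J, (1 - x j)) * ((Fintype.card (V → Bool) : ℝ))
      ≤ (avoid E J).card := by
    intro J
    induction J using Finset.induction_on with
    | empty =>
      intro _
      simp only [Finset.prod_empty, one_mul]
      have : avoid E (∅ : Finset ι) = Finset.univ := by
        ext c; simp [mem_avoid]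
      rw [this]
      simp
    | @insert a J haJ IHJ =>
      intro hsub
      have haI : a ∈ I := hsub (Finset.mem_insert_self a J)
      have hJI : J ⊆ I := fun t ht => hsub (Finset.mem_insert_of_mem ht)
      have hclaim := lll_claim I E vbl x hx0 hx1 hdet hp J.card J hJI rfl a haI haJ
      rw [card_avoid_insert, Finset.prod_insert haJ]
      have hprodnn : (0:ℝ) ≤ ∏ j ∈ J, (1 - x j) := by
        apply Finset.prod_nonneg
        intro j hj
        have := hx1 j (hJI hj); linarith
      have h1 := IHJ hJI
      have hxa1 := hx1 a haI
      have hxa0 := hx0 a haI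
      nlinarith
  have hpos : (0:ℝ) < (avoid E I).card := by
    have h := key I (le_refl I)
    have hprodpos : (0:ℝ) < ∏ j ∈ I, (1 - x j) := by
      apply Finset.prod_pos
      intro j hj
      have := hx1 j hj; linarith
    have hΩpos : (0:ℝ) < Fintype.card (V → Bool) := by exact_mod_cast Fintype.card_pos
    nlinarith
  have : (avoid E I).Nonempty := by
    rw [← Finset.card_pos]
    exact_mod_cast hpos
  obtain ⟨c, hc⟩ := this
  exact ⟨c, mem_avoid.mp hc⟩

end LLLmain




/-- helper: geometric sums of (1/2)^n over distinct exponents ≥ 1 are ≤ 1 -/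
lemma sum_pow_half_le (s : Finset ℕ) (hs : ∀ n ∈ s, 1 ≤ n) :
    ∑ n ∈ s, ((1:ℝ)/2)^n ≤ 1 := by
  set N := s.sup id with hN
  have hsub : s ⊆ Finset.Ico 1 (N+1) := by
    intro n hn
    rw [Finset.mem_Ico]
    exact ⟨hs n hn, Nat.lt_succ_of_le (Finset.le_sup (f := id) hn)⟩
  have h1 : ∑ n ∈ s, ((1:ℝ)/2)^n ≤ ∑ n ∈ Finset.Ico 1 (N+1), ((1:ℝ)/2)^n := by
    apply Finset.sum_le_sum_of_subset_of_nonneg hsub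
    intro n _ _; positivity
  have h2 : ∑ n ∈ Finset.Ico 1 (N+1), ((1:ℝ)/2)^n
      = (∑ n ∈ Finset.range (N+1), ((1:ℝ)/2)^n) - ∑ n ∈ Finset.range 1, ((1:ℝ)/2)^n := by
    rw [Finset.sum_Ico_eq_sub _ (Nat.one_le_iff_ne_zero.mpr (Nat.succ_ne_zero N))]
  have h3 : ∑ n ∈ Finset.range (N+1), ((1:ℝ)/2)^n ≤ 2 := sum_geometric_two_le _
  rw [h2] at h1
  simp only [Finset.range_one, Finset.sum_singleton, pow_zero] at h1
  linarith
/-- helper: `exp (-(2x)) ≤ 1 - x` for `0 ≤ x ≤ 1/2`. -/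
lemma exp_neg_two_le (x : ℝ) (h0 : 0 ≤ x) (h2 : x ≤ 1/2) :
    Real.exp (-(2*x)) ≤ 1 - x := by
  have h := Real.add_one_le_exp (2*x)
  have hpos : (0:ℝ) < Real.exp (2*x) := Real.exp_pos _
  rw [Real.exp_neg, inv_eq_one_div, div_le_iff₀ hpos]
  nlinarith

lemma half_pow_eq_exp (n : ℕ) : ((1:ℝ)/2)^n = Real.exp (-(Real.log 2) * n) := by
  rw [mul_comm, Real.exp_nat_mul, Real.exp_neg, Real.exp_log two_pos]
  norm_num

lemma exp_neg_two_nat_ge (k : ℕ) :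
    ((1:ℝ)/2)^(50*k) ≤ Real.exp (-(2*(k:ℝ))) := by
  rw [half_pow_eq_exp]
  apply Real.exp_le_exp.mpr
  push_cast
  nlinarith [Real.log_two_gt_d9, (Nat.cast_nonneg k : (0:ℝ) ≤ k)]

/-- greedy construction of a finite set `S` with `g S ∩ S = ∅`. -/
lemma exists_good_finset {G : Type*} [Group G] [Infinite G] [DecidableEq G]
    (g : G) (hg : g ≠ 1) (k : ℕ) :
    ∃ S : Finset G, S.card = k ∧ ∀ a ∈ S, ∀ b ∈ S, g * a ≠ b := by
  induction k with
  | zero => exact ⟨∅, by simp⟩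
  | succ k IH =>
    obtain ⟨S, hcard, hdisj⟩ := IH
    obtain ⟨s, hs⟩ := Infinite.exists_notMem_finset
      (S ∪ S.image (g * ·) ∪ S.image (g⁻¹ * ·))
    simp only [Finset.mem_union, Finset.mem_image, not_or, not_exists] at hs
    obtain ⟨⟨hs1, hs2⟩, hs3⟩ := hs
    have hsS : s ∉ S := hs1
    refine ⟨insert s S, by rw [Finset.card_insert_of_notMem hsS, hcard], ?_⟩
    intro a ha b hb
    rw [Finset.mem_insert] at ha hb
    rcases ha with ha | ha <;> rcases hb with hb | hb
    · intro h; rw [ha, hb] at h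
      exact hg (mul_right_cancel (h.trans (one_mul s).symm))
    · intro h; rw [ha] at h
      exact hs3 b ⟨hb, by rw [← h, inv_mul_cancel_left]⟩
    · intro h; rw [hb] at h
      exact hs2 a ⟨ha, h⟩
    · exact hdisj a ha b hb

/-- arithmetic bound for a single dependency class. -/
lemma term_bound (M M' : ℕ) (hM' : 1 ≤ M') (C : ℕ) (hC : C ≤ (200*M) * (200*M')) :
    (C : ℝ) * ((1:ℝ)/2)^(50*M') ≤ (M : ℝ) * ((1:ℝ)/2)^(M') := by
  have h1 : (C:ℝ) ≤ 200*M*(200*M') := by exact_mod_cast hC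
  have hM'2 : (M':ℝ) ≤ 2^(M':ℕ) := by exact_mod_cast (Nat.lt_two_pow_self (n := M')).le
  have key : (40000:ℝ) * M' * ((1:ℝ)/2)^(50*M') ≤ ((1:ℝ)/2)^(M') := by
    have h2 : (40000:ℝ) * M' ≤ 2^(49*M') := by
      calc (40000:ℝ) * M' ≤ 2^16 * 2^(M':ℕ) := by nlinarith
      _ = 2^(16+M') := by rw [pow_add]
      _ ≤ 2^(49*M') := by
          apply pow_le_pow_right₀ one_le_two
          omega
    have h3 : ((1:ℝ)/2)^(50*M') = ((1:ℝ)/2)^(M') * ((1:ℝ)/2)^(49*M') := by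
      rw [← pow_add]; congr 1; omega
    have h4 : ((1:ℝ)/2)^(49*M') = ((2:ℝ)^(49*M'))⁻¹ := by rw [one_div, inv_pow]
    have hb : (0:ℝ) < 2^(49*M') := by positivity
    have h5 : (40000:ℝ)*M' * ((2:ℝ)^(49*M'))⁻¹ ≤ 1 := by
      rw [← div_eq_mul_inv, div_le_one hb]; exact h2
    have h6 : (0:ℝ) ≤ ((1:ℝ)/2)^(M':ℕ) := by positivity
    calc (40000:ℝ) * M' * ((1:ℝ)/2)^(50*M')
        = (40000 * M' * ((2:ℝ)^(49*M'))⁻¹) * ((1:ℝ)/2)^(M':ℕ) := by rw [h3, h4]; ring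
    _ ≤ 1 * ((1:ℝ)/2)^(M':ℕ) := by apply mul_le_mul_of_nonneg_right h5 h6
    _ = ((1:ℝ)/2)^(M':ℕ) := one_mul _
  have hp50 : (0:ℝ) ≤ ((1:ℝ)/2)^(50*M') := by positivity
  have hA : (C:ℝ) * ((1:ℝ)/2)^(50*M') ≤ (200*(M:ℝ)*(200*(M':ℝ))) * ((1:ℝ)/2)^(50*M') :=
    mul_le_mul_of_nonneg_right h1 hp50
  have hB2 : (200*(M:ℝ)*(200*(M':ℝ))) * ((1:ℝ)/2)^(50*M')
      = (M:ℝ) * ((40000:ℝ) * (M':ℝ) * ((1:ℝ)/2)^(50*M')) := by ring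
  have hC2 : (M:ℝ) * ((40000:ℝ) * (M':ℝ) * ((1:ℝ)/2)^(50*M')) ≤ (M:ℝ) * ((1:ℝ)/2)^(M':ℕ) :=
    mul_le_mul_of_nonneg_left key (Nat.cast_nonneg M)
  rw [hB2] at hA
  exact le_trans hA hC2

theorem finite_sat {G : Type*} [Group G] [DecidableEq G]
    (m : G → ℕ) (hm : ∀ g : G, 1 ≤ m g) (hminj : Function.Injective m)
    (S : G → Finset G)
    (hScard : ∀ g : G, g ≠ 1 → (S g).card = 100 * m g)
    (hSdisj : ∀ g : G, g ≠ 1 → ∀ a ∈ S g, ∀ b ∈ S g, g * a ≠ b)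
    (I : Finset (G × G)) (hI : ∀ i ∈ I, i.1 ≠ 1) :
    ∃ c : G → Bool, ∀ i ∈ I, ∃ a ∈ S i.1, c (i.2 * a) ≠ c (i.2 * i.1 * a) := by
  classical
  set B : G → Finset G := fun g => S g ∪ (S g).image (g * ·) with hBdef
  set W : Finset G := I.biUnion (fun i => (B i.1).image (i.2 * ·)) with hWdef
  have hmemW : ∀ i ∈ I, ∀ b ∈ B i.1, i.2 * b ∈ W := by
    intro i hi b hb
    rw [hWdef]
    exact Finset.mem_biUnion.mpr ⟨i, hi, Finset.mem_image_of_mem _ hb⟩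
  have haB : ∀ g : G, ∀ a ∈ S g, a ∈ B g := by
    intro g a ha; rw [hBdef]; exact Finset.mem_union_left _ ha
  have hgaB : ∀ g : G, ∀ a ∈ S g, g * a ∈ B g := by
    intro g a ha; rw [hBdef]
    exact Finset.mem_union_right _ (Finset.mem_image_of_mem _ ha)
  have hBcard : ∀ g : G, g ≠ 1 → (B g).card ≤ 200 * m g := by
    intro g hg
    rw [hBdef]
    calc (S g ∪ (S g).image (g * ·)).card
        ≤ (S g).card + ((S g).image (g * ·)).card := Finset.card_union_le _ _
    _ ≤ (S g).card + (S g).card := by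
        have := Finset.card_image_le (s := S g) (f := (g * ·)); omega
    _ = 200 * m g := by rw [hScard g hg]; ring
  set ev : G → ({y : G // y ∈ W} → Bool) → Bool :=
    fun y c => if hy : y ∈ W then c ⟨y, hy⟩ else false with hevdef
  have hevy : ∀ (y : G) (hy : y ∈ W) (c : {y : G // y ∈ W} → Bool), ev y c = c ⟨y, hy⟩ := by
    intro y hy c; rw [hevdef]; exact dif_pos hy
  set E : G × G → Finset ({y : G // y ∈ W} → Bool) := fun i =>
    Finset.univ.filter (fun c => ∀ a ∈ S i.1, ev (i.2 * a) c = ev (i.2 * i.1 * a) c) with hEdef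
  set vbl : G × G → Finset {y : G // y ∈ W} := fun i =>
    Finset.univ.filter (fun v => (v : G) ∈ (B i.1).image (i.2 * ·)) with hvbldef
  set x : G × G → ℝ := fun i => ((1:ℝ)/2) ^ (50 * m i.1) with hxdef
  have hx0 : ∀ i ∈ I, 0 < x i := by intro i _; rw [hxdef]; positivity
  have hx1 : ∀ i ∈ I, x i < 1 := by
    intro i _
    rw [hxdef]
    apply pow_lt_one₀ (by norm_num) (by norm_num)
    have := hm i.1; omega
  -- determination of events by their variables
  have hdet : ∀ i ∈ I, ∀ c c' : {y : G // y ∈ W} → Bool,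
      (∀ v ∈ vbl i, c v = c' v) → (c ∈ E i ↔ c' ∈ E i) := by
    intro i hi c c' hcc
    have key : ∀ b ∈ B i.1, ev (i.2 * b) c = ev (i.2 * b) c' := by
      intro b hb
      have hyW : i.2 * b ∈ W := hmemW i hi b hb
      rw [hevy _ hyW, hevy _ hyW]
      apply hcc
      rw [hvbldef]
      simp only [Finset.mem_filter, Finset.mem_univ, true_and]
      exact Finset.mem_image_of_mem _ hb
    have key2 : ∀ a ∈ S i.1, ev (i.2 * i.1 * a) c = ev (i.2 * i.1 * a) c' := by
      intro a ha
      rw [mul_assoc]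
      exact key (i.1 * a) (hgaB _ a ha)
    rw [hEdef]
    simp only [Finset.mem_filter, Finset.mem_univ, true_and]
    constructor <;> intro h a ha
    · rw [← key a (haB _ a ha), ← key2 a ha]; exact h a ha
    · rw [key a (haB _ a ha), key2 a ha]; exact h a ha
  -- counting the bad events
  have hcount : ∀ i ∈ I, (E i).card * 2 ^ (100 * m i.1)
      ≤ Fintype.card ({y : G // y ∈ W} → Bool) := by
    intro i hi
    have hg1 : i.1 ≠ 1 := hI i hi
    have hWa : ∀ a ∈ S i.1, i.2 * a ∈ W := fun a ha => hmemW i hi a (haB _ a ha)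
    have hWga : ∀ a ∈ S i.1, i.2 * i.1 * a ∈ W := by
      intro a ha; rw [mul_assoc]; exact hmemW i hi _ (hgaB _ a ha)
    have hgaS : ∀ a ∈ S i.1, i.1 * a ∉ S i.1 :=
      fun a ha hga => hSdisj i.1 hg1 a ha (i.1 * a) hga rfl
    have hmemE : ∀ c ∈ E i, ∀ a, ∀ ha : a ∈ S i.1,
        c ⟨i.2 * a, hWa a ha⟩ = c ⟨i.2 * i.1 * a, hWga a ha⟩ := by
      intro c hc a ha
      rw [hEdef] at hc
      have := (Finset.mem_filter.mp hc).2 a ha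
      rwa [hevy _ (hWa a ha), hevy _ (hWga a ha)] at this
    set Φ : ({y : G // y ∈ W} → Bool) × ({a // a ∈ S i.1} → Bool) → ({y : G // y ∈ W} → Bool) :=
      fun p v => if h' : (i.2)⁻¹ * (v : G) ∈ S i.1
        then xor (p.2 ⟨(i.2)⁻¹ * (v : G), h'⟩) (p.1 v) else p.1 v with hPhidef
    have hPhieval : ∀ p v, Φ p v = if h' : (i.2)⁻¹ * (v : G) ∈ S i.1
        then xor (p.2 ⟨(i.2)⁻¹ * (v : G), h'⟩) (p.1 v) else p.1 v := fun p v => rfl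
    have hle := Finset.card_le_card_of_injOn
      (t := (Finset.univ : Finset ({y : G // y ∈ W} → Bool))) Φ
      (s := (E i) ×ˢ (Finset.univ : Finset ({a // a ∈ S i.1} → Bool)))
      (fun p _ => Finset.mem_univ _) ?_
    · rw [Finset.card_product, Finset.card_univ, Finset.card_univ] at hle
      have hcard2 : Fintype.card ({a // a ∈ S i.1} → Bool) = 2 ^ (100 * m i.1) := by
        rw [Fintype.card_fun, Fintype.card_coe, hScard i.1 hg1, Fintype.card_bool]
      rwa [hcard2] at hle
    · -- injectivity
      intro p hp q hq hfeq
      rw [Finset.coe_product] at hp hq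
      have hpE : p.1 ∈ E i := hp.1
      have hqE : q.1 ∈ E i := hq.1
      have hoff : ∀ v : {y : G // y ∈ W}, (i.2)⁻¹ * (v : G) ∉ S i.1 → p.1 v = q.1 v := by
        intro v hv
        have hcv := congrFun hfeq v
        rw [hPhieval p v, hPhieval q v, dif_neg hv, dif_neg hv] at hcv
        exact hcv
      have hga_val : ∀ a, ∀ ha : a ∈ S i.1,
          p.1 ⟨i.2 * i.1 * a, hWga a ha⟩ = q.1 ⟨i.2 * i.1 * a, hWga a ha⟩ := by
        intro a ha
        apply hoff
        show (i.2)⁻¹ * (i.2 * i.1 * a) ∉ S i.1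
        rw [mul_assoc, inv_mul_cancel_left]
        exact hgaS a ha
      have ha_val : ∀ a, ∀ ha : a ∈ S i.1,
          p.1 ⟨i.2 * a, hWa a ha⟩ = q.1 ⟨i.2 * a, hWa a ha⟩ := by
        intro a ha
        rw [hmemE p.1 hpE a ha, hmemE q.1 hqE a ha]
        exact hga_val a ha
      have hP1 : p.1 = q.1 := by
        funext v
        by_cases hv : (i.2)⁻¹ * (v : G) ∈ S i.1
        · have hveq : v = ⟨i.2 * ((i.2)⁻¹ * (v : G)), hWa _ hv⟩ :=
            Subtype.ext (show (v : G) = i.2 * ((i.2)⁻¹ * (v : G)) from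
              (mul_inv_cancel_left _ _).symm)
          rw [hveq]
          exact ha_val _ hv
        · exact hoff v hv
      have hP2 : p.2 = q.2 := by
        funext a
        obtain ⟨a, ha⟩ := a
        have hv := congrFun hfeq ⟨i.2 * a, hWa a ha⟩
        rw [hPhieval p _, hPhieval q _] at hv
        have hmem : (i.2)⁻¹ * ((⟨i.2 * a, hWa a ha⟩ : {y : G // y ∈ W}) : G) ∈ S i.1 := by
          show (i.2)⁻¹ * (i.2 * a) ∈ S i.1
          rwa [inv_mul_cancel_left]
        rw [dif_pos hmem, dif_pos hmem] at hv
        rw [hP1] at hv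
        have hsub : (⟨(i.2)⁻¹ * ((⟨i.2 * a, hWa a ha⟩ : {y : G // y ∈ W}) : G), hmem⟩ :
            {a // a ∈ S i.1}) = ⟨a, ha⟩ := Subtype.ext (inv_mul_cancel_left i.2 a)
        rw [hsub] at hv
        cases hq1 : q.1 ⟨i.2 * a, hWa a ha⟩ <;> rw [hq1] at hv <;> simpa using hv
      exact Prod.ext hP1 hP2
  -- LLL numerical hypothesis
  have hp : ∀ i ∈ I, ((E i).card : ℝ) ≤
      x i * (∏ j ∈ I.filter (fun j => ¬ Disjoint (vbl i) (vbl j)), (1 - x j)) *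
        (Fintype.card ({y : G // y ∈ W} → Bool)) := by
    intro i hi
    have hg1 : i.1 ≠ 1 := hI i hi
    set T := I.filter (fun j => ¬ Disjoint (vbl i) (vbl j)) with hTdef
    have hTI : T ⊆ I := Finset.filter_subset _ _
    -- counting dependencies in a single fiber
    have hhT : ∀ g' : G, (T.filter (fun j => j.1 = g')).card ≤ (B i.1).card * (B g').card := by
      intro g'
      set Hset : Finset G := ((B i.1).image (i.2 * ·)).biUnion
        (fun w => (B g').image (fun b => w * b⁻¹)) with hHdef
      have hcardH : Hset.card ≤ (B i.1).card * (B g').card := by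
        rw [hHdef]
        calc (((B i.1).image (i.2 * ·)).biUnion
              (fun w => (B g').image (fun b => w * b⁻¹))).card
            ≤ ∑ w ∈ (B i.1).image (i.2 * ·), ((B g').image (fun b => w * b⁻¹)).card :=
              Finset.card_biUnion_le
        _ ≤ ∑ _w ∈ (B i.1).image (i.2 * ·), (B g').card := by
              apply Finset.sum_le_sum; intro w _; exact Finset.card_image_le
        _ = ((B i.1).image (i.2 * ·)).card * (B g').card := by
              rw [Finset.sum_const, smul_eq_mul]
        _ ≤ (B i.1).card * (B g').card := by
              have := Finset.card_image_le (s := B i.1) (f := (i.2 * ·))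
              exact Nat.mul_le_mul_right _ this
      refine le_trans (Finset.card_le_card_of_injOn Prod.snd ?_ ?_) hcardH
      · intro j hj
        rw [Finset.mem_coe, Finset.mem_filter] at hj
        obtain ⟨hjT, hjfst⟩ := hj
        rw [hTdef, Finset.mem_filter] at hjT
        obtain ⟨hjI, hjnd⟩ := hjT
        rw [Finset.not_disjoint_iff] at hjnd
        obtain ⟨v, hv1, hv2⟩ := hjnd
        rw [hvbldef] at hv1 hv2
        simp only [Finset.mem_filter, Finset.mem_univ, true_and] at hv1 hv2
        obtain ⟨b1, hb1, hb1e⟩ := Finset.mem_image.mp hv1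
        obtain ⟨b2, hb2, hb2e⟩ := Finset.mem_image.mp hv2
        rw [hHdef]
        apply Finset.mem_biUnion.mpr
        refine ⟨i.2 * b1, Finset.mem_image_of_mem _ hb1, ?_⟩
        apply Finset.mem_image.mpr
        refine ⟨b2, hjfst ▸ hb2, ?_⟩
        rw [hb1e, ← hb2e, mul_inv_cancel_right]
      · intro j hj k hk hjk
        rw [Finset.mem_coe, Finset.mem_filter] at hj hk
        exact Prod.ext (hj.2.trans hk.2.symm) hjk
    -- the sum of x over T
    set Tg := T.image Prod.fst with hTgdef
    have hfib := Finset.sum_fiberwise_of_maps_to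
      (fun j (hj : j ∈ T) => Finset.mem_image_of_mem Prod.fst hj) x
    have hsum : ∑ j ∈ T, x j ≤ (m i.1 : ℝ) := by
      rw [← hfib]
      have hstep : ∀ g' ∈ Tg, ∑ j ∈ T.filter (fun j => j.1 = g'), x j
          ≤ (m i.1 : ℝ) * ((1:ℝ)/2)^(m g') := by
        intro g' hg'
        have hg'1 : g' ≠ 1 := by
          obtain ⟨j, hj, rfl⟩ := Finset.mem_image.mp hg'
          exact hI j (hTI hj)
        have hinner : ∑ j ∈ T.filter (fun j => j.1 = g'), x j
            = ((T.filter (fun j => j.1 = g')).card : ℝ) * ((1:ℝ)/2)^(50 * m g') := by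
          rw [Finset.sum_congr rfl (fun j hj => ?_), Finset.sum_const, nsmul_eq_mul]
          rw [hxdef]
          simp only
          rw [(Finset.mem_filter.mp hj).2]
        rw [hinner]
        apply term_bound (m i.1) (m g') (hm g')
        calc (T.filter (fun j => j.1 = g')).card ≤ (B i.1).card * (B g').card := hhT g'
        _ ≤ (200 * m i.1) * (200 * m g') :=
            Nat.mul_le_mul (hBcard _ hg1) (hBcard _ hg'1)
      calc ∑ g' ∈ Tg, ∑ j ∈ T.filter (fun j => j.1 = g'), x j
          ≤ ∑ g' ∈ Tg, (m i.1 : ℝ) * ((1:ℝ)/2)^(m g') := Finset.sum_le_sum hstep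
      _ = (m i.1 : ℝ) * ∑ g' ∈ Tg, ((1:ℝ)/2)^(m g') := by rw [Finset.mul_sum]
      _ ≤ (m i.1 : ℝ) * 1 := by
          apply mul_le_mul_of_nonneg_left _ (Nat.cast_nonneg _)
          have himg : ∑ g' ∈ Tg, ((1:ℝ)/2)^(m g') = ∑ n ∈ Tg.image m, ((1:ℝ)/2)^n := by
            rw [Finset.sum_image (fun a _ b _ hab => hminj hab)]
          rw [himg]
          apply sum_pow_half_le
          intro n hn
          obtain ⟨g', _, rfl⟩ := Finset.mem_image.mp hn
          exact hm g'
      _ = (m i.1 : ℝ) := mul_one _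
    -- product lower bound
    have hx_le_half : ∀ j ∈ T, x j ≤ 1/2 := by
      intro j hj
      have h1 : 1 ≤ 50 * m j.1 := by have := hm j.1; omega
      rw [hxdef]
      calc ((1:ℝ)/2)^(50 * m j.1) ≤ ((1:ℝ)/2)^1 :=
        pow_le_pow_of_le_one (by norm_num) (by norm_num) h1
      _ = 1/2 := pow_one _
    have hx_nonneg : ∀ j ∈ T, (0:ℝ) ≤ x j := by
      intro j _; rw [hxdef]; positivity
    have hprod : ((1:ℝ)/2) ^ (50 * m i.1) ≤ ∏ j ∈ T, (1 - x j) := by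
      have hsneg : ∑ j ∈ T, -(2 * x j) = -(2 * ∑ j ∈ T, x j) := by
        rw [Finset.mul_sum, ← Finset.sum_neg_distrib]
      have step1 : Real.exp (-(2 * ((m i.1 : ℝ)))) ≤ Real.exp (∑ j ∈ T, -(2 * x j)) := by
        apply Real.exp_le_exp.mpr
        rw [hsneg]
        linarith
      have step2 : Real.exp (∑ j ∈ T, -(2 * x j)) ≤ ∏ j ∈ T, (1 - x j) := by
        rw [Real.exp_sum]
        apply Finset.prod_le_prod
        · intro j _; exact (Real.exp_pos _).le
        · intro j hj; exact exp_neg_two_le (x j) (hx_nonneg j hj) (hx_le_half j hj)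
      exact le_trans (exp_neg_two_nat_ge (m i.1)) (le_trans step1 step2)
    have hΩ : (0:ℝ) < (Fintype.card ({y : G // y ∈ W} → Bool) : ℝ) := by
      exact_mod_cast Fintype.card_pos
    have hcnt : ((E i).card : ℝ)
        ≤ ((1:ℝ)/2) ^ (100 * m i.1) * (Fintype.card ({y : G // y ∈ W} → Bool) : ℝ) := by
      have hc' : ((E i).card : ℝ) * 2 ^ (100 * m i.1)
          ≤ (Fintype.card ({y : G // y ∈ W} → Bool) : ℝ) := by
        exact_mod_cast hcount i hi
      have h2 : ((1:ℝ)/2) ^ (100 * m i.1) = ((2:ℝ) ^ (100 * m i.1))⁻¹ := by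
        rw [one_div, inv_pow]
      rw [h2, inv_mul_eq_div, le_div_iff₀ (by positivity)]
      exact hc'
    calc ((E i).card : ℝ)
        ≤ ((1:ℝ)/2) ^ (100 * m i.1) * (Fintype.card ({y : G // y ∈ W} → Bool) : ℝ) := hcnt
    _ = (x i * ((1:ℝ)/2) ^ (50 * m i.1)) * (Fintype.card ({y : G // y ∈ W} → Bool) : ℝ) := by
        rw [hxdef]
        simp only
        rw [← pow_add]
        congr 2
        omega
    _ ≤ (x i * ∏ j ∈ T, (1 - x j)) * (Fintype.card ({y : G // y ∈ W} → Bool) : ℝ) := by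
        apply mul_le_mul_of_nonneg_right _ (le_of_lt hΩ)
        apply mul_le_mul_of_nonneg_left hprod
        rw [hxdef]; positivity
    _ = x i * (∏ j ∈ T, (1 - x j)) * (Fintype.card ({y : G // y ∈ W} → Bool) : ℝ) := by ring
  obtain ⟨c, hc⟩ := lll I E vbl x hx0 hx1 hdet hp
  refine ⟨fun y => ev y c, ?_⟩
  intro i hi
  have hmem : ¬ (∀ a ∈ S i.1, ev (i.2 * a) c = ev (i.2 * i.1 * a) c) := by
    intro hall
    apply hc i hi
    rw [hEdef]
    exact Finset.mem_filter.mpr ⟨Finset.mem_univ _, hall⟩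
  push_neg at hmem
  obtain ⟨a, ha, hne⟩ := hmem
  exact ⟨a, ha, hne⟩


end GJS

/-- **Gao–Jackson–Seward.** Every countably infinite group `G` has the 2-coloring property:
there is `c : G → {0,1}` such that for every `g ≠ e` there is a finite set `A ⊆ G` such that
for every `h ∈ G` there is `a ∈ A ∩ g⁻¹A` with `c (h a) ≠ c (h g a)`. -/
theorem gao_jackson_seward_two_coloring {G : Type*} [Group G] [Countable G] [Infinite G] :
    ∃ c : G → Bool, ∀ g : G, g ≠ 1 → ∃ A : Finset G, ∀ h : G,
      ∃ a ∈ A, g * a ∈ A ∧ c (h * a) ≠ c (h * g * a) := by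
  classical
  obtain ⟨enc, hencinj⟩ := exists_injective_nat G
  set m : G → ℕ := fun g => enc g + 1 with hmdef
  have hm : ∀ g, 1 ≤ m g := fun g => Nat.le_add_left 1 (enc g)
  have hminj : Function.Injective m := by
    intro a b hab
    apply hencinj
    have h' : enc a + 1 = enc b + 1 := hab
    omega
  have hS : ∀ g : G, ∃ S : Finset G,
      g ≠ 1 → (S.card = 100 * m g ∧ ∀ a ∈ S, ∀ b ∈ S, g * a ≠ b) := by
    intro g
    by_cases hg : g = 1
    · exact ⟨∅, fun h => absurd hg h⟩
    · obtain ⟨S, h1, h2⟩ := GJS.exists_good_finset g hg (100 * m g)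
      exact ⟨S, fun _ => ⟨h1, h2⟩⟩
  choose S hSspec using hS
  set Y : G × G → Set (G → Bool) := fun i =>
    {c | ∃ a ∈ S i.1, c (i.2 * a) ≠ c (i.2 * i.1 * a)} with hYdef
  have hYclosed : ∀ i : G × G, IsClosed (Y i) := by
    intro i
    have hrw : Y i = ⋃ a ∈ (S i.1 : Set G),
        {c : G → Bool | c (i.2 * a) ≠ c (i.2 * i.1 * a)} := by
      ext c; simp [hYdef]
    rw [hrw]
    apply Set.Finite.isClosed_biUnion (Finset.finite_toSet _)
    intro a _
    have hcont : Continuous (fun c : G → Bool => (c (i.2 * a), c (i.2 * i.1 * a))) :=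
      (continuous_apply _).prodMk (continuous_apply _)
    show IsClosed ((fun c : G → Bool => (c (i.2 * a), c (i.2 * i.1 * a))) ⁻¹'
      {q : Bool × Bool | q.1 ≠ q.2})
    exact IsClosed.preimage hcont (isClosed_discrete _)
  have hfin : ∀ F : Finset {i : G × G // i.1 ≠ 1}, (⋂ p ∈ F, Y (p : G × G)).Nonempty := by
    intro F
    obtain ⟨c, hc⟩ := GJS.finite_sat m hm hminj S
      (fun g hg => (hSspec g hg).1) (fun g hg => (hSspec g hg).2)
      (F.image Subtype.val)
      (by
        intro i hi
        obtain ⟨p, _, rfl⟩ := Finset.mem_image.mp hi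
        exact p.2)
    refine ⟨c, ?_⟩
    rw [Set.mem_iInter₂]
    intro p hp
    exact hc p.1 (Finset.mem_image_of_mem _ hp)
  have hnonempty :
      (⋂ F : Finset {i : G × G // i.1 ≠ 1}, ⋂ p ∈ F, Y (p : G × G)).Nonempty := by
    apply IsCompact.nonempty_iInter_of_directed_nonempty_isCompact_isClosed
    · intro F1 F2
      refine ⟨F1 ∪ F2, ?_, ?_⟩
      · intro c hc
        rw [Set.mem_iInter₂] at hc ⊢
        intro p hp
        exact hc p (Finset.mem_union_left _ hp)
      · intro c hc
        rw [Set.mem_iInter₂] at hc ⊢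
        intro p hp
        exact hc p (Finset.mem_union_right _ hp)
    · exact hfin
    · intro F
      apply IsClosed.isCompact
      exact isClosed_biInter (fun p _ => hYclosed p)
    · intro F
      exact isClosed_biInter (fun p _ => hYclosed p)
  obtain ⟨c, hc⟩ := hnonempty
  refine ⟨c, ?_⟩
  intro g hg
  refine ⟨S g ∪ (S g).image (g * ·), ?_⟩
  intro h
  have hcY : c ∈ Y (g, h) := by
    have h1 := Set.mem_iInter.mp hc ({⟨(g, h), hg⟩} : Finset {i : G × G // i.1 ≠ 1})
    rw [Set.mem_iInter₂] at h1
    exact h1 ⟨(g, h), hg⟩ (Finset.mem_singleton_self _)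
  obtain ⟨a, ha, hne⟩ := hcY
  exact ⟨a, Finset.mem_union_left _ ha,
    Finset.mem_union_right _ (Finset.mem_image_of_mem _ ha), hne⟩
end
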